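/- arXiv:2205.00250 — 8 statements merged into one kernel-verified Lean document; each statement's English description precedes it below -/
import Mathlib

section
/- Let P and Q be posets. If the set of non-trivial ideals of P and the set of non-trivial ideals of Q are both countable, then the Scott topology on the product poset P × Q coincides with the product topology of the Scott spaces of P and Q. -/
/-- An ideal of a poset: a nonempty, directed lower set.  It is *non-trivial*
if it contains no maximum element. -/
def NontrivialIdeal {P : Type*} [Preorder P] (I : Set P) : Prop :=
  I.Nonempty ∧ DirectedOn (· ≤ ·) I ∧ IsLowerSet I ∧ ¬ ∃ m ∈ I, ∀ x ∈ I, x ≤ m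

/-!
Projections are Scott continuous, so the product topology is coarser than the Scott topology of
`P × Q`. Conversely, let `U` be Scott open with `(a, b) ∈ U`. Enumerate the non-trivial ideals
`Iₙ` of `P` and `Jₙ` of `Q`, and grow finite sets `Fₙ ∋ a`, `Gₙ ∋ b` with `Fₙ × Gₙ ⊆ U`: at
stage `n`, add to `Fₙ` a point of `Iₙ` compatible with all of `Gₙ` if there is one, then do the
same for `Jₙ` and `Gₙ`. The upper closures `V` of `⋃ Fₙ` and `W` of `⋃ Gₙ` satisfy `V × W ⊆ U`,
and `V` is Scott open: if a directed set `d` without greatest element has supremum `s ∈ V`, its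
lower closure is some `Iₙ`; for finite `G ⊆ ⋃ Gₙ` the set `{x | {x} × G ⊆ U}` is a Scott-open
neighbourhood of `s`, hence meets `d`, so a point of `Iₙ` was added at stage `n` and `d` meets
`V`. The same argument applies to `W`.
-/

open Set Topology

section Rectangle

variable {α β : Type*}

lemma prod_subset_preimage_swap_iff {s : Set α} {t : Set β} {R : Set (α × β)} :
    t ×ˢ s ⊆ Prod.swap ⁻¹' R ↔ s ×ˢ t ⊆ R := by
  simp only [prod_subset_iff, mem_preimage, Prod.swap_prod_mk]
  exact forall₂_comm

variable (R : Set (α × β))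

noncomputable def insertCompatible (I : Set α) (G : Set β) (F : Set α) : Set α :=
  open Classical in
  if h : ∃ x ∈ I, ∀ y ∈ G, (x, y) ∈ R then insert h.choose F else F

variable {R} {I : Set α} {G : Set β} {F : Set α}

lemma subset_insertCompatible : F ⊆ insertCompatible R I G F := by
  unfold insertCompatible; split
  · exact subset_insert _ _
  · exact subset_rfl

lemma finite_insertCompatible (hF : F.Finite) : (insertCompatible R I G F).Finite := by
  unfold insertCompatible; split
  · exact hF.insert _
  · exact hF

lemma insertCompatible_prod_subset (hFG : F ×ˢ G ⊆ R) : insertCompatible R I G F ×ˢ G ⊆ R := by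
  unfold insertCompatible; split
  · rename_i h
    rw [insert_prod]
    exact union_subset (by rintro _ ⟨y, hy, rfl⟩; exact h.choose_spec.2 y hy) hFG
  · exact hFG

lemma insertCompatible_inter_nonempty (h : ∃ x ∈ I, ∀ y ∈ G, (x, y) ∈ R) :
    (insertCompatible R I G F ∩ I).Nonempty := by
  rw [insertCompatible, dif_pos h]
  exact ⟨h.choose, mem_insert _ _, h.choose_spec.1⟩

variable (R)

noncomputable def rectangleApprox (a : α) (b : β) (I : ℕ → Set α) (J : ℕ → Set β) :
    ℕ → Set α × Set β
  | 0 => ({a}, {b})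
  | n + 1 =>
    let F := insertCompatible R (I n) (rectangleApprox a b I J n).2 (rectangleApprox a b I J n).1
    (F, insertCompatible (Prod.swap ⁻¹' R) (J n) F (rectangleApprox a b I J n).2)

variable {R} {a : α} {b : β} {I : ℕ → Set α} {J : ℕ → Set β}

lemma monotone_rectangleApprox : Monotone (rectangleApprox R a b I J) :=
  monotone_nat_of_le_succ fun _ => ⟨subset_insertCompatible, subset_insertCompatible⟩

lemma rectangleApprox_finite (n : ℕ) :
    (rectangleApprox R a b I J n).1.Finite ∧ (rectangleApprox R a b I J n).2.Finite := by
  induction n with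
  | zero => exact ⟨finite_singleton a, finite_singleton b⟩
  | succ n ih => exact ⟨finite_insertCompatible ih.1, finite_insertCompatible ih.2⟩

lemma rectangleApprox_prod_subset (hab : (a, b) ∈ R) (n : ℕ) :
    (rectangleApprox R a b I J n).1 ×ˢ (rectangleApprox R a b I J n).2 ⊆ R := by
  induction n with
  | zero => simpa [rectangleApprox] using hab
  | succ n ih =>
    have hF := insertCompatible_prod_subset (I := I n) ih
    exact prod_subset_preimage_swap_iff.1
      (insertCompatible_prod_subset (prod_subset_preimage_swap_iff.2 hF))

theorem exists_prod_subset_inter_nonempty (hab : (a, b) ∈ R) :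
    ∃ A B, a ∈ A ∧ b ∈ B ∧ A ×ˢ B ⊆ R ∧
      (∀ i, (∀ G ⊆ B, G.Finite → ∃ x ∈ I i, ∀ y ∈ G, (x, y) ∈ R) → (A ∩ I i).Nonempty) ∧
      (∀ j, (∀ F ⊆ A, F.Finite → ∃ y ∈ J j, ∀ x ∈ F, (x, y) ∈ R) → (B ∩ J j).Nonempty) := by
  set S := rectangleApprox R a b I J
  refine ⟨⋃ n, (S n).1, ⋃ n, (S n).2, mem_iUnion_of_mem 0 rfl, mem_iUnion_of_mem 0 rfl,
    ?_, fun i hi => ?_, fun j hj => ?_⟩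
  · rintro ⟨x, y⟩ ⟨hx, hy⟩
    obtain ⟨m, hm⟩ := mem_iUnion.1 hx
    obtain ⟨n, hn⟩ := mem_iUnion.1 hy
    exact rectangleApprox_prod_subset hab (max m n)
      ⟨(monotone_rectangleApprox (le_max_left m n)).1 hm,
        (monotone_rectangleApprox (le_max_right m n)).2 hn⟩
  · obtain ⟨x, hxS, hxI⟩ := insertCompatible_inter_nonempty (F := (S i).1)
      (hi _ (subset_iUnion (fun n => (S n).2) i) (rectangleApprox_finite i).2)
    exact ⟨x, mem_iUnion_of_mem (i + 1) hxS, hxI⟩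
  · have hcompat : ∃ y ∈ J j, ∀ x ∈ (S (j + 1)).1, (y, x) ∈ Prod.swap ⁻¹' R :=
      hj _ (subset_iUnion (fun n => (S n).1) (j + 1)) (rectangleApprox_finite (j + 1)).1
    obtain ⟨y, hyS, hyJ⟩ := insertCompatible_inter_nonempty (F := (S j).2) hcompat
    exact ⟨y, mem_iUnion_of_mem (j + 1) hyS, hyJ⟩

end Rectangle

section Scott

variable {α β : Type*} [Preorder α] [Preorder β]

lemma isOpen_scott_iff {s : Set α} : IsOpen[scott α univ] s ↔ IsUpperSet s ∧ DirSupInacc s := by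
  let := scott α univ
  have : IsScott α univ := ⟨rfl⟩
  rw [IsScott.isOpen_iff_isUpperSet_and_dirSupInaccOn (D := univ), dirSupInaccOn_univ]

lemma ScottContinuous.continuous_scott {f : α → β} (hf : ScottContinuous f) :
    Continuous[scott α univ, scott β univ] f := by
  let := scott α univ
  let := scott β univ
  have : IsScott α univ := ⟨rfl⟩
  have : IsScott β univ := ⟨rfl⟩
  exact (IsScott.scottContinuousOn_iff_continuous (D := univ) fun _ _ _ => mem_univ _).1
    hf.scottContinuousOn

lemma scott_prod_le_instTopologicalSpaceProd :
    scott (α × β) univ ≤ @instTopologicalSpaceProd α β (scott α univ) (scott β univ) :=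
  le_inf (continuous_iff_le_induced.1 ScottContinuous.fst.continuous_scott)
    (continuous_iff_le_induced.1 ScottContinuous.snd.continuous_scott)

lemma isOpen_scott_setOf_forall_mem {U : Set (α × β)} (hU : IsOpen[scott (α × β) univ] U)
    {G : Set β} (hG : G.Finite) : IsOpen[scott α univ] {x | ∀ y ∈ G, (x, y) ∈ U} := by
  let := scott α univ
  let := scott (α × β) univ
  have hslice (y : β) : ScottContinuous fun x : α => (x, y) :=
    ScottContinuous.id.prodMk (ScottContinuous.const y)
  have hinter : {x | ∀ y ∈ G, (x, y) ∈ U} = ⋂ y ∈ G, (fun x => (x, y)) ⁻¹' U := by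
    ext; simp
  rw [hinter]
  exact hG.isOpen_biInter fun y _ => (hslice y).continuous_scott.isOpen_preimage U hU

lemma isOpen_scott_preimage_swap {U : Set (α × β)} (hU : IsOpen[scott (α × β) univ] U) :
    IsOpen[scott (β × α) univ] (Prod.swap ⁻¹' U) := by
  let := scott (α × β) univ
  let := scott (β × α) univ
  exact (ScottContinuous.snd.prodMk ScottContinuous.fst).continuous_scott.isOpen_preimage U hU

lemma nontrivialIdeal_lowerClosure {d : Set α} (hd : d.Nonempty) (hdir : DirectedOn (· ≤ ·) d)
    (hmax : ∀ y, ¬ IsGreatest d y) : NontrivialIdeal (lowerClosure d : Set α) := by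
  refine ⟨hd.mono subset_lowerClosure, ?_, (lowerClosure d).lower, ?_⟩
  · rintro x ⟨y, hy, hxy⟩ x' ⟨y', hy', hx'y'⟩
    obtain ⟨z, hz, hyz, hy'z⟩ := hdir y hy y' hy'
    exact ⟨z, subset_lowerClosure hz, hxy.trans hyz, hx'y'.trans hy'z⟩
  · rintro ⟨m, ⟨y, hy, hmy⟩, hm⟩
    exact hmax y ⟨hy, fun z hz => (hm z (subset_lowerClosure hz)).trans hmy⟩

lemma isOpen_scott_upperClosure {U : Set (α × β)} (hU : IsOpen[scott (α × β) univ] U)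
    {A : Set α} {B : Set β} (hAB : A ×ˢ B ⊆ U)
    (hA : ∀ I, NontrivialIdeal I →
      (∀ G ⊆ B, G.Finite → ∃ x ∈ I, ∀ y ∈ G, (x, y) ∈ U) → (A ∩ I).Nonempty) :
    IsOpen[scott α univ] (upperClosure A : Set α) := by
  refine isOpen_scott_iff.2 ⟨(upperClosure A).upper, fun d hd hdir s hs hsA => ?_⟩
  by_cases hgreatest : ∃ y, IsGreatest d y
  · obtain ⟨y, hyd, hyub⟩ := hgreatest
    exact ⟨y, hyd, (upperClosure A).upper (hs.2 hyub) hsA⟩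
  obtain ⟨p, hpA, hps⟩ := hsA
  have hcompat : ∀ G ⊆ B, G.Finite → ∃ x ∈ (lowerClosure d : Set α), ∀ y ∈ G, (x, y) ∈ U := by
    intro G hGB hG
    have hsG : s ∈ {x | ∀ y ∈ G, (x, y) ∈ U} := fun y hy =>
      (isOpen_scott_iff.1 hU).1 (show (p, y) ≤ (s, y) from ⟨hps, le_rfl⟩) (hAB ⟨hpA, hGB hy⟩)
    obtain ⟨x, hxd, hx⟩ :=
      (isOpen_scott_iff.1 (isOpen_scott_setOf_forall_mem hU hG)).2 hd hdir hs hsG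
    exact ⟨x, subset_lowerClosure hxd, hx⟩
  obtain ⟨x, hxA, y, hyd, hxy⟩ :=
    hA _ (nontrivialIdeal_lowerClosure hd hdir (not_exists.1 hgreatest)) hcompat
  exact ⟨y, hyd, x, hxA, hxy⟩

theorem exists_isOpen_scott_prod_subset
    (hα : {I : Set α | NontrivialIdeal I}.Countable)
    (hβ : {I : Set β | NontrivialIdeal I}.Countable)
    {U : Set (α × β)} (hU : IsOpen[scott (α × β) univ] U) {a : α} {b : β} (hab : (a, b) ∈ U) :
    ∃ V W, IsOpen[scott α univ] V ∧ IsOpen[scott β univ] W ∧ a ∈ V ∧ b ∈ W ∧ V ×ˢ W ⊆ U := by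
  obtain ⟨I, hI⟩ := countable_iff_exists_subset_range.1 hα
  obtain ⟨J, hJ⟩ := countable_iff_exists_subset_range.1 hβ
  obtain ⟨A, B, haA, hbB, hAB, hAI, hBJ⟩ := exists_prod_subset_inter_nonempty (I := I) (J := J) hab
  refine ⟨upperClosure A, upperClosure B, isOpen_scott_upperClosure hU hAB ?_,
    isOpen_scott_upperClosure (isOpen_scott_preimage_swap hU)
      (prod_subset_preimage_swap_iff.2 hAB) ?_,
    subset_upperClosure haA, subset_upperClosure hbB, ?_⟩
  · intro I' hI'
    obtain ⟨i, rfl⟩ := hI hI'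
    exact hAI i
  · intro J' hJ'
    obtain ⟨j, rfl⟩ := hJ hJ'
    exact hBJ j
  · rw [← UpperSet.coe_prod, ← upperClosure_prod]
    exact upperClosure_min hAB (isOpen_scott_iff.1 hU).1

end Scott

/-- If the sets of non-trivial ideals of the posets `P` and `Q` are both countable, then the
Scott topology on the product poset `P × Q` coincides with the product topology of the
Scott spaces of `P` and `Q`. -/
theorem scott_prod_eq_prod_scott {P Q : Type*} [PartialOrder P] [PartialOrder Q]
    (hP : {I : Set P | NontrivialIdeal I}.Countable)
    (hQ : {I : Set Q | NontrivialIdeal I}.Countable) :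
    Topology.scott (P × Q) Set.univ =
      @instTopologicalSpaceProd P Q (Topology.scott P Set.univ) (Topology.scott Q Set.univ) := by
  refine le_antisymm scott_prod_le_instTopologicalSpaceProd fun U hU => ?_
  let := scott P univ
  let := scott Q univ
  exact isOpen_prod_iff.2 fun a b hab => exists_isOpen_scott_prod_subset hP hQ hU hab
end

section
/- Let L be a complete lattice whose set of non-trivial ideals Id(L) is countable. Then the Scott space ΣL is sober. -/
/-- A space is sober if it is `T₀` and every irreducible closed set is the closure of a point. -/
def SoberSpace (X : Type*) [TopologicalSpace X] : Prop :=
  @T0Space X _ ∧ @QuasiSober X _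

/-!
Let `S` be an irreducible Scott-closed set. If `sSup S ∉ S`, then `S` is not directed, so some
`w₁, w₂ ∈ S` have `w₁ ⊔ w₂ ∉ S`. Starting from `{w₁}` and `{w₂}`, run through an enumeration of
the non-trivial ideals and grow two finite sets of generators so that every join of an element of
one with an element of the other stays outside `S`: when the supremum of an ideal `I` lies above a
generator, add an element of `I` whose joins with the other side avoid `S`. Such an element exists
because `{x | ∀ b ∈ H, x ⊔ b ∉ S}` is Scott-open for finite `H` and contains `sSup I`.
Since Scott-openness only has to be tested on non-trivial ideals, the upper closures of the two
generator sets are Scott-open; both meet `S`, but their intersection misses `S`, contradicting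
irreducibility. Hence `sSup S ∈ S`, and it is the generic point of `S`.
-/

open Set Topology

section Preorder

variable {P : Type*} [Preorder P]

lemma isLUB_lowerClosure {s : Set P} {a : P} : IsLUB (lowerClosure s : Set P) a ↔ IsLUB s a := by
  rw [IsLUB, IsLUB, upperBounds_lowerClosure]

lemma DirectedOn.lowerClosure {d : Set P} (hd : DirectedOn (· ≤ ·) d) :
    DirectedOn (· ≤ ·) (lowerClosure d : Set P) := by
  rintro x ⟨b₁, hb₁, hxb₁⟩ y ⟨b₂, hb₂, hyb₂⟩
  obtain ⟨b, hb, hb₁b, hb₂b⟩ := hd b₁ hb₁ b₂ hb₂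
  exact ⟨b, subset_lowerClosure hb, hxb₁.trans hb₁b, hyb₂.trans hb₂b⟩

/-- A directed set whose lower closure has a maximum already contains an element above its
supremum, so only non-trivial ideals need to be tested. -/
lemma dirSupInacc_of_nontrivialIdeal {U : Set P} (hU : IsUpperSet U)
    (h : ∀ I a, NontrivialIdeal I → IsLUB I a → a ∈ U → (I ∩ U).Nonempty) : DirSupInacc U := by
  intro d hd hdd a ha haU
  by_cases hmax : ∃ m ∈ (lowerClosure d : Set P), ∀ x ∈ (lowerClosure d : Set P), x ≤ m
  · obtain ⟨m, ⟨b, hb, hmb⟩, hm⟩ := hmax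
    exact ⟨b, hb, hU ((ha.2 fun x hx => hm x (subset_lowerClosure hx)).trans hmb) haU⟩
  · have hI : NontrivialIdeal (lowerClosure d : Set P) :=
      ⟨hd.mono subset_lowerClosure, hdd.lowerClosure, (lowerClosure d).lower, hmax⟩
    obtain ⟨y, ⟨b, hb, hyb⟩, hy⟩ := h _ a hI (isLUB_lowerClosure.2 ha) haU
    exact ⟨b, hb, hU hyb hy⟩

end Preorder

section SemilatticeSup

variable {L : Type*} [SemilatticeSup L]

def Apart (S G H : Set L) : Prop :=
  ∀ a ∈ G, ∀ b ∈ H, a ⊔ b ∉ S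

lemma Apart.symm {S G H : Set L} (h : Apart S G H) : Apart S H G :=
  fun b hb a ha => sup_comm a b ▸ h a ha b hb

lemma Apart.disjoint_upperClosure {S G H : Set L} (hS : IsLowerSet S) (h : Apart S G H) :
    Disjoint S (upperClosure G ∩ upperClosure H : Set L) := by
  rw [Set.disjoint_left]
  rintro c hc ⟨⟨a, ha, hac⟩, ⟨b, hb, hbc⟩⟩
  exact h a ha b hb (hS (sup_le hac hbc) hc)

end SemilatticeSup

section Scott

variable {L : Type*} [CompleteLattice L] [TopologicalSpace L] [IsScott L univ]

lemma continuous_sup_const (a : L) : Continuous (· ⊔ a) := by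
  have hsc : ScottContinuous (· ⊔ a) :=
    (ScottContinuous.id.prodMk (ScottContinuous.const a)).comp ScottContinuous.sup₂
  exact (IsScott.scottContinuousOn_iff_continuous (D := univ) fun _ _ _ => trivial).1
    hsc.scottContinuousOn

lemma isOpen_of_nontrivialIdeal {U : Set L} (hU : IsUpperSet U)
    (h : ∀ I, NontrivialIdeal I → sSup I ∈ U → (I ∩ U).Nonempty) : IsOpen U := by
  rw [IsScott.isOpen_iff_isUpperSet_and_dirSupInaccOn (D := univ), dirSupInaccOn_univ]
  exact ⟨hU, dirSupInacc_of_nontrivialIdeal hU fun I a hI ha => ha.sSup_eq ▸ h I hI⟩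

lemma exists_mem_forall_sup_notMem {S : Set L} (hS : IsClosed S) {I : Set L}
    (hI : I.Nonempty) (hId : DirectedOn (· ≤ ·) I) {H : Set L} (hH : H.Finite)
    (h : ∀ b ∈ H, sSup I ⊔ b ∉ S) : ∃ y ∈ I, ∀ b ∈ H, y ⊔ b ∉ S := by
  have hO : IsOpen (⋂ b ∈ H, (· ⊔ b) ⁻¹' Sᶜ) :=
    hH.isOpen_biInter fun b _ => hS.isOpen_compl.preimage (continuous_sup_const b)
  have hinacc := ((IsScott.isOpen_iff_isUpperSet_and_dirSupInaccOn (D := univ)).1 hO).2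
  obtain ⟨y, hy, hyO⟩ := hinacc trivial hI hId (isLUB_sSup I) (mem_iInter₂.2 h)
  exact ⟨y, hy, mem_iInter₂.1 hyO⟩

end Scott

section Construction

variable {L : Type*} [SemilatticeSup L] {S I : Set L} {G H : Finset L}

open Classical in
noncomputable def extendApart (S I : Set L) (G H : Finset L) : Finset L :=
  if h : ∃ y ∈ I, ∀ b ∈ H, y ⊔ b ∉ S then insert h.choose G else G

lemma subset_extendApart : G ⊆ extendApart S I G H := by
  classical
  unfold extendApart
  split_ifs
  exacts [Finset.subset_insert _ _, subset_rfl]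

lemma Apart.extendApart (hGH : Apart S G H) : Apart S (extendApart S I G H) H := by
  classical
  unfold _root_.extendApart
  split_ifs with h
  · intro a ha
    rcases Finset.mem_insert.1 ha with rfl | ha
    exacts [h.choose_spec.2, hGH a ha]
  · exact hGH

lemma exists_mem_extendApart (h : ∃ y ∈ I, ∀ b ∈ H, y ⊔ b ∉ S) :
    ∃ y ∈ I, y ∈ extendApart S I G H := by
  classical
  rw [extendApart, dif_pos h]
  exact ⟨h.choose, h.choose_spec.1, Finset.mem_insert_self _ _⟩

/-- Every `k` recurs infinitely often as `(Nat.unpair n).1`, so each `f k` is visited again after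
any given stage. -/
noncomputable def apartStages (S : Set L) (f : ℕ → Set L) (w₁ w₂ : L) :
    ℕ → Finset L × Finset L
  | 0 => ({w₁}, {w₂})
  | n + 1 =>
    let p := apartStages S f w₁ w₂ n
    let G := extendApart S (f n.unpair.1) p.1 p.2
    (G, extendApart S (f n.unpair.1) p.2 G)

variable {f : ℕ → Set L} {w₁ w₂ : L}

lemma apart_apartStages (hw : w₁ ⊔ w₂ ∉ S) :
    ∀ n, Apart S (apartStages S f w₁ w₂ n).1 (apartStages S f w₁ w₂ n).2
  | 0 => by simpa [apartStages, Apart] using hw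
  | n + 1 => ((apart_apartStages hw n).extendApart.symm.extendApart).symm

lemma monotone_apartStages_fst : Monotone fun n => (apartStages S f w₁ w₂ n).1 :=
  monotone_nat_of_le_succ fun _ => subset_extendApart

lemma monotone_apartStages_snd : Monotone fun n => (apartStages S f w₁ w₂ n).2 :=
  monotone_nat_of_le_succ fun _ => subset_extendApart

lemma apart_iUnion_apartStages (hw : w₁ ⊔ w₂ ∉ S) :
    Apart S (⋃ n, ((apartStages S f w₁ w₂ n).1 : Set L))
      (⋃ n, ((apartStages S f w₁ w₂ n).2 : Set L)) := by
  intro a ha b hb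
  obtain ⟨n, ha⟩ := mem_iUnion.1 ha
  obtain ⟨m, hb⟩ := mem_iUnion.1 hb
  exact apart_apartStages hw (max n m) a (monotone_apartStages_fst (le_max_left n m) ha)
    b (monotone_apartStages_snd (le_max_right n m) hb)

end Construction

section Sober

variable {L : Type*} [CompleteLattice L] [TopologicalSpace L] [IsScott L univ]
  {S I : Set L} {G H : Finset L} {f : ℕ → Set L} {w₁ w₂ : L}

lemma exists_mem_extendApart_of_le_sSup (hS : IsClosed S) (hI : I.Nonempty)
    (hId : DirectedOn (· ≤ ·) I) (hGH : Apart S G H) {g : L} (hg : g ∈ G) (hgI : g ≤ sSup I) :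
    ∃ y ∈ I, y ∈ extendApart S I G H :=
  exists_mem_extendApart <| exists_mem_forall_sup_notMem hS hI hId H.finite_toSet fun b hb h =>
    hGH g hg b hb (IsScott.isLowerSet_of_isClosed hS (sup_le_sup_right hgI b) h)

lemma isOpen_upperClosure_apartStages_fst (hS : IsClosed S) (hw : w₁ ⊔ w₂ ∉ S)
    (hf : {I | NontrivialIdeal I} ⊆ range f) :
    IsOpen (upperClosure (⋃ n, ((apartStages S f w₁ w₂ n).1 : Set L)) : Set L) := by
  refine isOpen_of_nontrivialIdeal (UpperSet.upper _) fun I hI ⟨g, hg, hgI⟩ => ?_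
  obtain ⟨n, hg⟩ := mem_iUnion.1 hg
  obtain ⟨k, rfl⟩ := hf hI
  obtain ⟨y, hyI, hy⟩ := exists_mem_extendApart_of_le_sSup hS hI.1 hI.2.1
    (apart_apartStages hw (Nat.pair k n)) (monotone_apartStages_fst (Nat.right_le_pair k n) hg) hgI
  refine ⟨y, hyI, subset_upperClosure (mem_iUnion.2 ⟨Nat.pair k n + 1, ?_⟩)⟩
  simpa [apartStages] using hy

lemma isOpen_upperClosure_apartStages_snd (hS : IsClosed S) (hw : w₁ ⊔ w₂ ∉ S)
    (hf : {I | NontrivialIdeal I} ⊆ range f) :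
    IsOpen (upperClosure (⋃ n, ((apartStages S f w₁ w₂ n).2 : Set L)) : Set L) := by
  refine isOpen_of_nontrivialIdeal (UpperSet.upper _) fun I hI ⟨g, hg, hgI⟩ => ?_
  obtain ⟨n, hg⟩ := mem_iUnion.1 hg
  obtain ⟨k, rfl⟩ := hf hI
  obtain ⟨y, hyI, hy⟩ := exists_mem_extendApart_of_le_sSup hS hI.1 hI.2.1
    (apart_apartStages hw (Nat.pair k n)).extendApart.symm
    (monotone_apartStages_snd (Nat.right_le_pair k n) hg) hgI
  refine ⟨y, hyI, subset_upperClosure (mem_iUnion.2 ⟨Nat.pair k n + 1, ?_⟩)⟩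
  simpa [apartStages] using hy

lemma IsIrreducible.sSup_mem (hcount : {I : Set L | NontrivialIdeal I}.Countable)
    (hS : IsIrreducible S) (hSc : IsClosed S) : sSup S ∈ S := by
  by_contra hsup
  obtain ⟨w₁, hw₁, w₂, hw₂, hw⟩ : ∃ w₁ ∈ S, ∃ w₂ ∈ S, w₁ ⊔ w₂ ∉ S := by
    by_contra! hdir
    exact hsup <| IsScott.dirSupClosed_of_isClosed hSc subset_rfl hS.nonempty
      (fun a ha b hb => ⟨a ⊔ b, hdir a ha b hb, le_sup_left, le_sup_right⟩) (isLUB_sSup S)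
  obtain ⟨f, hf⟩ := countable_iff_exists_subset_range.1 hcount
  have hw₁U : w₁ ∈ upperClosure (⋃ n, ((apartStages S f w₁ w₂ n).1 : Set L)) :=
    subset_upperClosure (mem_iUnion.2 ⟨0, by simp [apartStages]⟩)
  have hw₂V : w₂ ∈ upperClosure (⋃ n, ((apartStages S f w₁ w₂ n).2 : Set L)) :=
    subset_upperClosure (mem_iUnion.2 ⟨0, by simp [apartStages]⟩)
  obtain ⟨c, hcS, hcUV⟩ := hS.2 _ _ (isOpen_upperClosure_apartStages_fst hSc hw hf)
    (isOpen_upperClosure_apartStages_snd hSc hw hf) ⟨w₁, hw₁, hw₁U⟩ ⟨w₂, hw₂, hw₂V⟩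
  exact ((apart_iUnion_apartStages hw).disjoint_upperClosure
    (IsScott.isLowerSet_of_isClosed hSc)).notMem_of_mem_left hcS hcUV

lemma IsClosed.isGenericPoint_sSup (hS : IsClosed S) (h : sSup S ∈ S) :
    IsGenericPoint (sSup S) S := by
  rw [IsGenericPoint, IsScott.closure_singleton]
  exact Subset.antisymm (fun _ hx => IsScott.isLowerSet_of_isClosed hS hx h) fun _ hx => le_sSup hx

end Sober

/-- A complete lattice whose set of non-trivial ideals is countable has a sober Scott space. -/
theorem completeLattice_sober_of_countableIdeals {L : Type*} [CompleteLattice L]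
    (hcount : {I : Set L | NontrivialIdeal I}.Countable) :
    @SoberSpace L (Topology.scott L Set.univ) := by
  let _ : TopologicalSpace L := scott L univ
  have : IsScott L univ := ⟨rfl⟩
  exact ⟨inferInstance, ⟨fun hS hSc => ⟨_, hSc.isGenericPoint_sSup (hS.sSup_mem hcount hSc)⟩⟩⟩
end

section
/- There exists a poset L with uncountably many non-trivial ideals such that the Scott topology on L × L coincides with the product of the Scott topologies. Concretely, L = ℝ × ℕ ordered by (r,m) ≤ (s,n) iff r = s and m ≤ n has this property: L is a continuous poset, σ(L × L) = σ(L) × σ(L), but Id(L) is uncountable. -/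
/-- The way-below relation: `a` is way below `b` if every directed set whose supremum
dominates `b` contains an element above `a`. -/
def WayBelow {P : Type*} [Preorder P] (a b : P) : Prop :=
  ∀ d : Set P, d.Nonempty → DirectedOn (· ≤ ·) d → ∀ s : P, IsLUB d s → b ≤ s → ∃ c ∈ d, a ≤ c

/-- A poset is continuous if every element is the supremum of the (nonempty, directed) set
of elements way below it. -/
def ContinuousPoset (P : Type*) [Preorder P] : Prop :=
  ∀ x : P, {a | WayBelow a x}.Nonempty ∧ DirectedOn (· ≤ ·) {a | WayBelow a x} ∧
    IsLUB {a | WayBelow a x} x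

/-- The poset `ℝ × ℕ` ordered by `(r,m) ≤ (s,n) ↔ r = s ∧ m ≤ n`. -/
structure RL where
  r : ℝ
  n : ℕ

instance : PartialOrder RL where
  le x y := x.r = y.r ∧ x.n ≤ y.n
  le_refl x := ⟨rfl, le_refl _⟩
  le_trans x y z h₁ h₂ := ⟨h₁.1.trans h₂.1, h₁.2.trans h₂.2⟩
  le_antisymm x y h₁ h₂ := by
    cases x; cases y
    simp only [RL.mk.injEq]
    exact ⟨h₁.1, le_antisymm h₁.2 h₂.2⟩

/-! Every principal down-set of `RL` is finite (a copy of `{0, …, n}`), and hence so is every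
principal down-set of `RL × RL`. In such a poset a directed set with a supremum contains it, so
way-below coincides with `≤` and the Scott topology is the topology of upper sets, which commutes
with finite products. Yet the fibres `{r} × ℕ` are pairwise distinct non-trivial ideals, one for
each real `r`. -/

open Set Topology

section FiniteIic

variable {α : Type*} [PartialOrder α]

theorem IsLUB.mem_of_finite_Iic (hfin : ∀ a : α, (Iic a).Finite) {d : Set α} (hne : d.Nonempty)
    (hdir : DirectedOn (· ≤ ·) d) {a : α} (ha : IsLUB d a) : a ∈ d := by
  obtain ⟨m, hm⟩ := ((hfin a).subset ha.1).exists_maximal hne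
  have hgreatest : IsGreatest d m := hdir.maximal_iff_isGreatest.mp hm
  exact hgreatest.isLUB.unique ha ▸ hgreatest.1

theorem wayBelow_iff_le_of_finite_Iic (hfin : ∀ a : α, (Iic a).Finite) {a b : α} :
    WayBelow a b ↔ a ≤ b := by
  refine ⟨fun h => ?_, fun hab d hne hdir s hs hbs =>
    ⟨s, hs.mem_of_finite_Iic hfin hne hdir, hab.trans hbs⟩⟩
  obtain ⟨c, rfl, hac⟩ :=
    h {b} (singleton_nonempty b) (directedOn_singleton b) b isLUB_singleton le_rfl
  exact hac

theorem continuousPoset_of_finite_Iic (hfin : ∀ a : α, (Iic a).Finite) : ContinuousPoset α := by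
  intro b
  have hIic : {a | WayBelow a b} = Iic b := ext fun a => wayBelow_iff_le_of_finite_Iic hfin
  rw [hIic]
  exact ⟨nonempty_Iic, fun x hx y hy => ⟨b, le_rfl, hx, hy⟩, isLUB_Iic⟩

theorem Topology.scott_eq_upperSet_of_finite_Iic (hfin : ∀ a : α, (Iic a).Finite) :
    scott α univ = upperSet α := by
  let := scott α univ
  have : IsScott α univ := ⟨rfl⟩
  ext s
  rw [IsScott.isOpen_iff_isUpperSet_and_dirSupInaccOn (D := univ)]
  exact ⟨And.left, fun hs => ⟨hs, fun d _ hne hdir a ha has =>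
    ⟨a, ha.mem_of_finite_Iic hfin hne hdir, has⟩⟩⟩

end FiniteIic

instance Topology.IsUpperSet.prod {α β : Type*} [Preorder α] [Preorder β] [TopologicalSpace α]
    [TopologicalSpace β] [Topology.IsUpperSet α] [Topology.IsUpperSet β] :
    Topology.IsUpperSet (α × β) := by
  rw [Topology.isUpperSet_iff_nhds]
  intro p
  rw [nhds_prod_eq, IsUpperSet.nhds_eq_principal_Ici, IsUpperSet.nhds_eq_principal_Ici,
    Filter.prod_principal_principal, Ici_prod_Ici]

namespace RL

theorem finite_Iic (x : RL) : (Iic x).Finite :=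
  ((Set.finite_Iic x.n).image fun k => (⟨x.r, k⟩ : RL)).subset fun y hy =>
    ⟨y.n, hy.2, by rw [← hy.1]⟩

def fiber (r : ℝ) : Set RL := {p | p.r = r}

theorem nontrivialIdeal_fiber (r : ℝ) : NontrivialIdeal (fiber r) := by
  refine ⟨⟨⟨r, 0⟩, rfl⟩, fun x hx y hy => ?_, fun x y hyx hx => hyx.1.trans hx, ?_⟩
  · exact ⟨⟨r, max x.n y.n⟩, rfl, ⟨hx, le_max_left _ _⟩, ⟨hy, le_max_right _ _⟩⟩
  · rintro ⟨m, hm, hmax⟩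
    exact (hmax ⟨r, m.n + 1⟩ rfl).2.not_gt m.n.lt_succ_self

theorem fiber_injective : Function.Injective fiber := fun r s h =>
  show (⟨r, 0⟩ : RL) ∈ fiber s from h ▸ rfl

theorem not_countable_nontrivialIdeal : ¬ {I : Set RL | NontrivialIdeal I}.Countable := by
  intro hc
  have hpre : fiber ⁻¹' {I : Set RL | NontrivialIdeal I} = univ :=
    eq_univ_of_forall nontrivialIdeal_fiber
  exact Cardinal.not_countable_real (hpre ▸ hc.preimage fiber_injective)

end RL

/-- There is a poset with uncountably many non-trivial ideals on which the Scott topology of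
the square coincides with the product of the Scott topologies: namely `L = ℝ × ℕ` with
`(r,m) ≤ (s,n) ↔ r = s ∧ m ≤ n` is a continuous poset, `σ(L × L) = σ(L) × σ(L)`, and yet
the set of non-trivial ideals of `L` is uncountable. -/
theorem continuous_poset_uncountable_ideals_scott_prod :
    ContinuousPoset RL ∧
    Topology.scott (RL × RL) Set.univ =
      @instTopologicalSpaceProd RL RL (Topology.scott RL Set.univ) (Topology.scott RL Set.univ) ∧
    ¬ {I : Set RL | NontrivialIdeal I}.Countable := by
  have hfin_prod : ∀ p : RL × RL, (Iic p).Finite := fun p => by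
    rw [Iic_prod_eq]
    exact (RL.finite_Iic p.1).prod (RL.finite_Iic p.2)
  refine ⟨continuousPoset_of_finite_Iic RL.finite_Iic, ?_, RL.not_countable_nontrivialIdeal⟩
  rw [scott_eq_upperSet_of_finite_Iic hfin_prod, scott_eq_upperSet_of_finite_Iic RL.finite_Iic]
  let := upperSet RL
  -- the instance `Topology.IsUpperSet.prod` identifies the product topology
  exact (IsUpperSet.topology_eq (RL × RL)).symm
end

section
/- Let P = ℕ × ℕ × (ℕ ∪ {∞}) be Jia's dcpo, ordered by (i₁,j₁,m₁) ≤ (i₂,j₂,m₂) iff either (i₁=i₂, j₁=j₂, m₁ ≤ m₂ ≤ ∞) or (i₂ = i₁+1, m₁ ≤ j₂, m₂ = ∞). Then the set of non-trivial ideals of P is exactly {{i}×{j}×ℕ : i,j ∈ ℕ}, and in particular Id(P) is countable. -/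
/-- Jia's dcpo: the underlying set `ℕ × ℕ × (ℕ ∪ {∞})` (positive naturals). -/
structure JiaP where
  i : ℕ+
  j : ℕ+
  m : WithTop ℕ+

namespace JiaP

/-- `(i₁,j₁,m₁) ≤ (i₂,j₂,m₂)` iff `i₁ = i₂, j₁ = j₂, m₁ ≤ m₂`, or
`i₂ = i₁ + 1, m₁ ≤ j₂, m₂ = ∞`. -/
instance : PartialOrder JiaP where
  le x y := (x.i = y.i ∧ x.j = y.j ∧ x.m ≤ y.m) ∨
    (y.i = x.i + 1 ∧ x.m ≤ (y.j : WithTop ℕ+) ∧ y.m = ⊤)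
  le_refl x := Or.inl ⟨rfl, rfl, le_refl _⟩
  le_trans x y z h g := by
    rcases h with ⟨h1, h2, h3⟩ | ⟨h1, h2, h3⟩ <;> rcases g with ⟨g1, g2, g3⟩ | ⟨g1, g2, g3⟩
    · exact Or.inl ⟨h1.trans g1, h2.trans g2, h3.trans g3⟩
    · exact Or.inr ⟨by rw [g1, ← h1], h3.trans g2, g3⟩
    · exact Or.inr ⟨by rw [← g1, h1], by rw [← g2]; exact h2, top_le_iff.mp (h3 ▸ g3)⟩
    · exact absurd (top_le_iff.mp (h3 ▸ g2)) WithTop.coe_ne_top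
  le_antisymm x y h g := by
    rcases h with ⟨h1, h2, h3⟩ | ⟨h1, h2, h3⟩ <;> rcases g with ⟨g1, g2, g3⟩ | ⟨g1, g2, g3⟩
    · cases x; cases y
      simp only [JiaP.mk.injEq]
      exact ⟨h1, h2, le_antisymm h3 g3⟩
    · exfalso
      have hh := h1.symm.trans g1
      have : (y.i : ℕ) = (y.i : ℕ) + 1 := by exact_mod_cast congrArg PNat.val hh
      omega
    · exfalso
      have hh := g1.symm.trans h1
      have : (x.i : ℕ) = (x.i : ℕ) + 1 := by exact_mod_cast congrArg PNat.val hh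
      omega
    · exfalso
      have hh : x.i = x.i + 1 + 1 := by rw [← h1]; exact g1
      have : (x.i : ℕ) = (x.i : ℕ) + 1 + 1 := by exact_mod_cast congrArg PNat.val hh
      omega

end JiaP

lemma JiaP.le_def {x y : JiaP} : x ≤ y ↔
    (x.i = y.i ∧ x.j = y.j ∧ x.m ≤ y.m) ∨
    (y.i = x.i + 1 ∧ x.m ≤ (y.j : WithTop ℕ+) ∧ y.m = ⊤) := Iff.rfl

lemma JiaP.ext' {x y : JiaP} (h1 : x.i = y.i) (h2 : x.j = y.j) (h3 : x.m = y.m) :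
    x = y := by cases x; cases y; simp_all

/-- The chain `{i} × {j} × ℕ` is a non-trivial ideal. -/
lemma chain_nontrivial (i j : ℕ+) :
    NontrivialIdeal {p : JiaP | ∃ m : ℕ+, p = ⟨i, j, (m : WithTop ℕ+)⟩} := by
  refine ⟨⟨⟨i, j, (1 : ℕ+)⟩, 1, rfl⟩, ?_, ?_, ?_⟩
  · rintro x ⟨a, rfl⟩ y ⟨b, rfl⟩
    exact ⟨⟨i, j, (max a b : ℕ+)⟩, ⟨max a b, rfl⟩,
      Or.inl ⟨rfl, rfl, show (a : WithTop ℕ+) ≤ ((a ⊔ b : ℕ+) : WithTop ℕ+) by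
        exact_mod_cast le_max_left a b⟩,
      Or.inl ⟨rfl, rfl, show (b : WithTop ℕ+) ≤ ((a ⊔ b : ℕ+) : WithTop ℕ+) by
        exact_mod_cast le_max_right a b⟩⟩
  · rintro y x hxy ⟨a, rfl⟩
    rcases hxy with ⟨h1, h2, h3⟩ | ⟨h1, h2, h3⟩
    · have hne : x.m ≠ ⊤ := fun ht => by
        rw [ht] at h3; exact absurd (top_le_iff.mp h3) WithTop.coe_ne_top
      obtain ⟨k, hk⟩ := WithTop.ne_top_iff_exists.mp hne
      exact ⟨k, JiaP.ext' h1 h2 hk.symm⟩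
    · exact absurd h3 WithTop.coe_ne_top
  · rintro ⟨p, ⟨a, rfl⟩, hmax⟩
    have := hmax ⟨i, j, ((a + 1 : ℕ+) : WithTop ℕ+)⟩ ⟨a + 1, rfl⟩
    rcases this with ⟨_, _, h3⟩ | ⟨h1, _, h3⟩
    · have h3' : ((a + 1 : ℕ+) : WithTop ℕ+) ≤ ((a : ℕ+) : WithTop ℕ+) := h3
      have : a + 1 ≤ a := by exact_mod_cast h3'
      have : (a : ℕ) + 1 ≤ (a : ℕ) := this
      omega
    · exact absurd h3 WithTop.coe_ne_top

/-- Any non-trivial ideal of Jia's dcpo is one of the chains. -/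
lemma nontrivial_is_chain {I : Set JiaP} (hI : NontrivialIdeal I) :
    ∃ i j : ℕ+, I = {p : JiaP | ∃ m : ℕ+, p = ⟨i, j, (m : WithTop ℕ+)⟩} := by
  obtain ⟨⟨x0, hx0⟩, hdir, hlow, hmax⟩ := hI
  -- no element of I has m = ⊤
  have hnotop : ∀ x ∈ I, x.m ≠ ⊤ := by
    intro x hx htop
    apply hmax
    refine ⟨x, hx, fun y hy => ?_⟩
    obtain ⟨z, hz, hxz, hyz⟩ := hdir x hx y hy
    have hzx : z = x := by
      rcases hxz with ⟨h1, h2, h3⟩ | ⟨h1, h2, h3⟩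
      · rw [htop] at h3
        exact (JiaP.ext' h1 h2 (htop.trans (top_le_iff.mp h3).symm)).symm
      · rw [htop] at h2
        exact absurd (top_le_iff.mp h2) WithTop.coe_ne_top
    exact hzx ▸ hyz
  -- all elements share the same i and j
  have hsame : ∀ x ∈ I, ∀ y ∈ I, x.i = y.i ∧ x.j = y.j := by
    intro x hx y hy
    obtain ⟨z, hz, hxz, hyz⟩ := hdir x hx y hy
    have hz' := hnotop z hz
    rcases hxz with ⟨h1, h2, _⟩ | ⟨_, _, h3⟩
    · rcases hyz with ⟨g1, g2, _⟩ | ⟨_, _, g3⟩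
      · exact ⟨h1.trans g1.symm, h2.trans g2.symm⟩
      · exact absurd g3 hz'
    · exact absurd h3 hz'
  -- every element strictly below some element
  have hstrict : ∀ x ∈ I, ∃ y ∈ I, x.m < y.m := by
    intro x hx
    by_contra hcon
    push_neg at hcon
    apply hmax
    refine ⟨x, hx, fun y hy => ?_⟩
    obtain ⟨hi, hj⟩ := hsame y hy x hx
    exact Or.inl ⟨hi, hj, hcon y hy⟩
  -- unboundedness: for every n there is an element with m-value > n
  have hunb : ∀ n : ℕ, ∃ x ∈ I, ∃ k : ℕ+, x.m = (k : WithTop ℕ+) ∧ n ≤ (k : ℕ) := by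
    intro n
    induction n with
    | zero =>
      obtain ⟨k, hk⟩ := WithTop.ne_top_iff_exists.mp (hnotop x0 hx0)
      exact ⟨x0, hx0, k, hk.symm, Nat.zero_le _⟩
    | succ n ih =>
      obtain ⟨x, hx, k, hk, hnk⟩ := ih
      obtain ⟨y, hy, hxy⟩ := hstrict x hx
      obtain ⟨k', hk'⟩ := WithTop.ne_top_iff_exists.mp (hnotop y hy)
      refine ⟨y, hy, k', hk'.symm, ?_⟩
      rw [hk, ← hk'] at hxy
      have : k < k' := by exact_mod_cast hxy
      have : (k : ℕ) < (k' : ℕ) := this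
      omega
  refine ⟨x0.i, x0.j, Set.eq_of_subset_of_subset ?_ ?_⟩
  · intro p hp
    obtain ⟨hi, hj⟩ := hsame p hp x0 hx0
    obtain ⟨k, hk⟩ := WithTop.ne_top_iff_exists.mp (hnotop p hp)
    exact ⟨k, JiaP.ext' hi hj hk.symm⟩
  · rintro p ⟨m, rfl⟩
    obtain ⟨x, hx, k, hk, hnk⟩ := hunb (m : ℕ)
    obtain ⟨hi, hj⟩ := hsame x hx x0 hx0
    refine hlow ?_ hx
    refine Or.inl ⟨hi.symm, hj.symm, ?_⟩
    rw [hk]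
    show ((m : ℕ+) : WithTop ℕ+) ≤ ((k : ℕ+) : WithTop ℕ+)
    exact_mod_cast hnk

/-- In Jia's dcpo the non-trivial ideals are exactly the chains `{i} × {j} × ℕ`;
in particular there are only countably many of them. -/
theorem JiaP_nontrivial_ideals :
    {I : Set JiaP | NontrivialIdeal I} =
      {I : Set JiaP | ∃ i j : ℕ+, I = {p : JiaP | ∃ m : ℕ+, p = ⟨i, j, (m : WithTop ℕ+)⟩}} ∧
    {I : Set JiaP | NontrivialIdeal I}.Countable := by
  have heq : {I : Set JiaP | NontrivialIdeal I} =
      {I : Set JiaP | ∃ i j : ℕ+, I = {p : JiaP | ∃ m : ℕ+, p = ⟨i, j, (m : WithTop ℕ+)⟩}} := by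
    ext I
    simp only [Set.mem_setOf_eq]
    constructor
    · exact nontrivial_is_chain
    · rintro ⟨i, j, rfl⟩
      exact chain_nontrivial i j
  refine ⟨heq, ?_⟩
  rw [heq]
  have : {I : Set JiaP | ∃ i j : ℕ+, I = {p : JiaP | ∃ m : ℕ+, p = ⟨i, j, (m : WithTop ℕ+)⟩}} =
      Set.range (fun q : ℕ+ × ℕ+ => {p : JiaP | ∃ m : ℕ+, p = ⟨q.1, q.2, (m : WithTop ℕ+)⟩}) := by
    ext I
    simp only [Set.mem_setOf_eq, Set.mem_range, Prod.exists]
    constructor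
    · rintro ⟨i, j, rfl⟩; exact ⟨i, j, rfl⟩
    · rintro ⟨i, j, rfl⟩; exact ⟨i, j, rfl⟩
  rw [this]
  exact Set.countable_range _
end

section
/- In Jia's dcpo P = ℕ × ℕ × (ℕ ∪ {∞}) with the order (i₁,j₁,m₁) ≤ (i₂,j₂,m₂) iff (i₁=i₂, j₁=j₂, m₁ ≤ m₂) or (i₂=i₁+1, m₁ ≤ j₂, m₂=∞), the intersection ↑(1,2,1) ∩ ↑(1,3,1) equals {(2,j,∞) : j ∈ ℕ} and is not compact in the Scott topology; hence ΣP is not coherent. -/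
/-- A set is saturated if it is the intersection of its open neighbourhoods. -/
def SaturatedSet {X : Type*} [TopologicalSpace X] (K : Set X) : Prop :=
  K = ⋂₀ {U : Set X | IsOpen U ∧ K ⊆ U}

/-- A space is coherent if the intersection of any two compact saturated sets is compact. -/
def CoherentSpace (X : Type*) [TopologicalSpace X] : Prop :=
  ∀ K₁ K₂ : Set X, IsCompact K₁ → SaturatedSet K₁ → IsCompact K₂ → SaturatedSet K₂ →
    IsCompact (K₁ ∩ K₂)

open Set Topology

section Saturation

variable {X : Type*} [TopologicalSpace X]

lemma saturatedSet_iff_nhdsKer_eq {K : Set X} : SaturatedSet K ↔ nhdsKer K = K := by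
  rw [SaturatedSet, nhdsKer_def, eq_comm]

lemma saturatedSet_nhdsKer (s : Set X) : SaturatedSet (nhdsKer s) :=
  saturatedSet_iff_nhdsKer_eq.2 (nhdsKer_nhdsKer s)

lemma not_coherentSpace_of_not_isCompact_nhdsKer_inter {a b : X}
    (h : ¬ IsCompact (nhdsKer {a} ∩ nhdsKer {b})) : ¬ CoherentSpace X := fun hX ↦
  h (hX _ _ isCompact_singleton.nhdsKer (saturatedSet_nhdsKer _)
    isCompact_singleton.nhdsKer (saturatedSet_nhdsKer _))

end Saturation

namespace Topology.IsScott

variable {α : Type*} [Preorder α] [TopologicalSpace α] [IsScott α univ]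

lemma nhdsKer_singleton (a : α) : nhdsKer {a} = Ici a := by
  ext x
  simp [mem_nhdsKer_singleton, specializes_iff_closure_subset]

lemma not_coherentSpace_of_not_isCompact_Ici_inter {a b : α}
    (h : ¬ IsCompact (Ici a ∩ Ici b)) : ¬ CoherentSpace α :=
  not_coherentSpace_of_not_isCompact_nhdsKer_inter (a := a) (b := b)
    (by rwa [nhdsKer_singleton, nhdsKer_singleton])

end Topology.IsScott

namespace JiaP

lemma le_iff {x y : JiaP} : x ≤ y ↔ (x.i = y.i ∧ x.j = y.j ∧ x.m ≤ y.m) ∨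
    (y.i = x.i + 1 ∧ x.m ≤ (y.j : WithTop ℕ+) ∧ y.m = ⊤) := Iff.rfl

lemma i_le_of_le {x y : JiaP} (h : x ≤ y) : x.i ≤ y.i := by
  rcases h with ⟨hi, -, -⟩ | ⟨hi, -, -⟩
  · exact hi.le
  · exact hi ▸ (PNat.lt_add_right _ _).le

lemma j_eq_of_le_of_i_eq {x y : JiaP} (h : x ≤ y) (hi : x.i = y.i) : x.j = y.j := by
  rcases h with ⟨-, hj, -⟩ | ⟨hi', -, -⟩
  · exact hj
  · exact absurd (hi.trans hi') (PNat.lt_add_right _ _).ne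

lemma one_le_iff {j : ℕ+} {p : JiaP} :
    (⟨1, j, (1 : ℕ+)⟩ : JiaP) ≤ p ↔ (p.i = 1 ∧ p.j = j) ∨ (p.i = 2 ∧ p.m = ⊤) := by
  simp [le_iff, @eq_comm _ (1 : ℕ+), @eq_comm _ j, show (1 + 1 : ℕ+) = 2 from rfl]

lemma Ici_inter_Ici_eq :
    Ici (⟨1, 2, (1 : ℕ+)⟩ : JiaP) ∩ Ici ⟨1, 3, (1 : ℕ+)⟩ = {p | ∃ j : ℕ+, p = ⟨2, j, ⊤⟩} := by
  ext ⟨i, k, m⟩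
  simp only [mem_inter_iff, mem_Ici, one_le_iff, mem_ofPred_eq, JiaP.mk.injEq]
  constructor
  · rintro ⟨⟨rfl, rfl⟩ | ⟨rfl, rfl⟩, h⟩
    · rcases h with ⟨-, h⟩ | ⟨h, -⟩ <;> exact absurd h (by decide)
    · exact ⟨k, rfl, rfl, rfl⟩
  · rintro ⟨k, rfl, rfl, rfl⟩
    exact ⟨.inr ⟨rfl, rfl⟩, .inr ⟨rfl, rfl⟩⟩

lemma exists_mem_i_eq_j_eq_of_isLUB {d : Set JiaP} (hne : d.Nonempty)
    (hd : DirectedOn (· ≤ ·) d) {a : JiaP} (ha : IsLUB d a) :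
    ∃ b ∈ d, b.i = a.i ∧ b.j = a.j := by
  by_contra! hcon
  have below : ∀ b ∈ d, a.i = b.i + 1 ∧ b.m ≤ (a.j : WithTop ℕ+) ∧ a.m = ⊤ :=
    fun b hb ↦ (ha.1 hb).resolve_left fun h ↦ hcon b hb h.1 h.2.1
  obtain ⟨b₀, hb₀⟩ := hne
  have hi : ∀ b ∈ d, b.i = b₀.i := fun b hb ↦
    add_right_cancel ((below b hb).1.symm.trans (below b₀ hb₀).1)
  have hj : ∀ b ∈ d, b.j = b₀.j := by
    intro b hb
    obtain ⟨c, hc, hbc, hb₀c⟩ := hd b hb b₀ hb₀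
    exact (j_eq_of_le_of_i_eq hbc ((hi b hb).trans (hi c hc).symm)).trans
      (j_eq_of_le_of_i_eq hb₀c (hi c hc).symm).symm
  have hub : (⟨b₀.i, b₀.j, a.j⟩ : JiaP) ∈ upperBounds d :=
    fun b hb ↦ .inl ⟨hi b hb, hj b hb, (below b hb).2.1⟩
  rcases ha.2 hub with ⟨hai, -, -⟩ | ⟨-, -, htop⟩
  · exact (PNat.lt_add_right b₀.i 1).ne (hai.symm.trans (below b₀ hb₀).1)
  · exact WithTop.coe_ne_top htop

variable [TopologicalSpace JiaP] [IsScott JiaP univ]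

lemma isOpen_of_isUpperSet_of_i_j {U : Set JiaP} (hU : IsUpperSet U)
    (hij : ∀ x y : JiaP, x.i = y.i → x.j = y.j → x ∈ U → y ∈ U) : IsOpen U := by
  rw [IsScott.isOpen_iff_isUpperSet_and_dirSupInaccOn (D := univ)]
  refine ⟨hU, fun d _ hne hd a ha haU ↦ ?_⟩
  obtain ⟨b, hb, hi, hj⟩ := exists_mem_i_eq_j_eq_of_isLUB hne hd ha
  exact ⟨b, hb, hij a b hi.symm hj.symm haU⟩

lemma isDiscrete_setOf_two_top : IsDiscrete {p : JiaP | ∃ j : ℕ+, p = ⟨2, j, ⊤⟩} := by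
  refine isDiscrete_iff_forall_mem_exists_isOpen.2 ?_
  rintro _ ⟨j, rfl⟩
  refine ⟨{p | (p.i = 2 ∧ p.j = j) ∨ 3 ≤ p.i}, isOpen_of_isUpperSet_of_i_j ?_ ?_, ?_⟩
  · rintro x y hxy (⟨hx2, hxj⟩ | hx3)
    · rcases hxy with ⟨hi, hj, -⟩ | ⟨hi, -, -⟩
      · exact .inl ⟨hi ▸ hx2, hj ▸ hxj⟩
      · exact .inr (by rw [hi, hx2]; decide)
    · exact .inr (hx3.trans (i_le_of_le hxy))
  · rintro x y hi hj hx
    rwa [mem_ofPred_eq, ← hi, ← hj]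
  · ext p
    constructor
    · rintro ⟨⟨-, rfl⟩ | h, k, rfl⟩
      · rfl
      · exact absurd h (by decide : ¬ (3 : ℕ+) ≤ 2)
    · rintro rfl
      exact ⟨.inl ⟨rfl, rfl⟩, j, rfl⟩

lemma not_isCompact_setOf_two_top : ¬ IsCompact {p : JiaP | ∃ j : ℕ+, p = ⟨2, j, ⊤⟩} := by
  intro h
  refine infinite_range_of_injective (f := fun j : ℕ+ ↦ (⟨2, j, ⊤⟩ : JiaP)) ?_ ?_
  · intro j k hjk
    exact (mk.inj hjk).2.1
  · convert h.finite isDiscrete_setOf_two_top using 1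
    ext p
    exact exists_congr fun j ↦ eq_comm

end JiaP

/-- In Jia's dcpo, `↑(1,2,1) ∩ ↑(1,3,1) = {(2,j,∞) : j ∈ ℕ}`, and this set is not compact
in the Scott topology; hence the Scott space of `JiaP` is not coherent. -/
theorem JiaP_not_coherent :
    {p : JiaP | (⟨1, 2, (1 : ℕ+)⟩ : JiaP) ≤ p} ∩ {p : JiaP | (⟨1, 3, (1 : ℕ+)⟩ : JiaP) ≤ p} =
      {p : JiaP | ∃ j : ℕ+, p = ⟨2, j, ⊤⟩} ∧
    ¬ @IsCompact JiaP (Topology.scott JiaP Set.univ) {p : JiaP | ∃ j : ℕ+, p = ⟨2, j, ⊤⟩} ∧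
    ¬ @CoherentSpace JiaP (Topology.scott JiaP Set.univ) := by
  let _ : TopologicalSpace JiaP := scott JiaP univ
  have : IsScott JiaP univ := ⟨rfl⟩
  have hS := JiaP.not_isCompact_setOf_two_top
  refine ⟨JiaP.Ici_inter_Ici_eq, hS, ?_⟩
  exact IsScott.not_coherentSpace_of_not_isCompact_Ici_inter (JiaP.Ici_inter_Ici_eq ▸ hS)
end

section
/- Let P be the countable poset constructed as follows. Let L = ℕ ∪ ℕ^{<ℕ} ∪ {⊤} (ℕ with usual order, ℕ^{<ℕ} with prefix order, ⊤ on top), P = ℕ × L, fix pairwise disjoint infinite sets i(m,n) ⊆ ℕ with strict lower bound n for m < n, and monotone bijections f_{m,n} : ℕ^{<ℕ} → i(m,n). Define strict relations <₁,<₂,<₃,<₄ as in the paper and let < be the transitive relation <₁ ∪ <₂ ∪ <₃ ∪ <₄ ∪ <₁;<₂ ∪ <₁;<₃ ∪ <₁;<₄, ≤ = < ∪ =. Then ≤ is a partial order on P and P is irreducible as a subset of its Scott space; that is, any two nonempty Scott open subsets of P intersect. -/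
/-- Nonempty finite sequences of positive natural numbers. -/
def FinSeq : Type := {l : List ℕ+ // l ≠ []}

/-- The poset `L = ℕ ∪ ℕ^{<ℕ} ∪ {⊤}`: the positive naturals with their usual order,
the nonempty finite sequences with the prefix order, a top element `⊤` above everything,
and no other relations. -/
inductive LL where
  | nat : ℕ+ → LL
  | seq : FinSeq → LL
  | top : LL

/-- The order on `L`. -/
def LL.le : LL → LL → Prop
  | _, .top => True
  | .nat m, .nat n => m ≤ n
  | .seq s, .seq t => s.1 <+: t.1
  | _, _ => False

theorem LL.nat_le_nat (m n : ℕ+) : LL.le (.nat m) (.nat n) ↔ m ≤ n := Iff.rfl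

theorem LL.seq_le_seq (s t : FinSeq) : LL.le (.seq s) (.seq t) ↔ s.1 <+: t.1 := Iff.rfl

instance : PartialOrder LL where
  le := LL.le
  le_refl x := by
    cases x with
    | nat n => exact (LL.nat_le_nat n n).2 (le_refl n)
    | seq s => exact (LL.seq_le_seq s s).2 (List.prefix_refl _)
    | top => trivial
  le_trans x y z h g := by
    cases x <;> cases y <;> cases z <;>
      first
        | trivial
        | exact (h : False).elim
        | exact (g : False).elim
        | exact (LL.nat_le_nat _ _).2
            (le_trans ((LL.nat_le_nat _ _).1 h) ((LL.nat_le_nat _ _).1 g))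
        | exact (LL.seq_le_seq _ _).2
            (List.IsPrefix.trans ((LL.seq_le_seq _ _).1 h) ((LL.seq_le_seq _ _).1 g))
  le_antisymm x y h g := by
    cases x <;> cases y <;>
      first
        | rfl
        | exact (h : False).elim
        | exact (g : False).elim
        | exact congrArg LL.nat (le_antisymm ((LL.nat_le_nat _ _).1 h) ((LL.nat_le_nat _ _).1 g))
        | exact congrArg LL.seq (Subtype.ext (List.IsPrefix.eq_of_length ((LL.seq_le_seq _ _).1 h)
            (Nat.le_antisymm (List.IsPrefix.length_le ((LL.seq_le_seq _ _).1 h))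
              (List.IsPrefix.length_le ((LL.seq_le_seq _ _).1 g)))))

/-- The underlying set of the construction: `P = ℕ × L`. -/
abbrev PP : Type := ℕ+ × LL

/-- The singleton sequence, identifying a positive natural with a length-one sequence. -/
def FinSeq.single (a : ℕ+) : FinSeq := ⟨[a], by simp⟩

/-- Append a letter to a finite sequence: `s.x`. -/
def FinSeq.snoc (s : FinSeq) (a : ℕ+) : FinSeq := ⟨s.1 ++ [a], by simp⟩

/-- The data of the construction: pairwise disjoint infinite sets `i m n ⊆ ℕ` (for `m < n`)
with strict lower bound `n`, and monotone bijections `f m n : ℕ^{<ℕ} → i m n`. -/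
structure GoodData (i : ℕ+ → ℕ+ → Set ℕ+) (f : ℕ+ → ℕ+ → FinSeq → ℕ+) : Prop where
  infinite : ∀ m n : ℕ+, m < n → (i m n).Infinite
  lower : ∀ m n : ℕ+, m < n → ∀ k ∈ i m n, n < k
  disjoint : ∀ m₁ n₁ m₂ n₂ : ℕ+, m₁ < n₁ → m₂ < n₂ → (m₁, n₁) ≠ (m₂, n₂) →
    i m₁ n₁ ∩ i m₂ n₂ = ∅
  mono : ∀ m n : ℕ+, m < n → ∀ s t : FinSeq, s.1 <+: t.1 → f m n s ≤ f m n t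
  inj : ∀ m n : ℕ+, m < n → Function.Injective (f m n)
  range : ∀ m n : ℕ+, m < n → Set.range (f m n) = i m n

/-- `(n,x) <₁ (m,y)` iff `n = m` and `x < y` in `L`. -/
def lt1 (x y : PP) : Prop := x.1 = y.1 ∧ LL.le x.2 y.2 ∧ x.2 ≠ y.2

/-- `(n,x) <₂ (m,⊤)` iff `x ∈ ℕ^{<ℕ}` and there is `k > n` with `m ∈ i(n,k)` and
`m = f_{n,k}(x)`. -/
def lt2 (i : ℕ+ → ℕ+ → Set ℕ+) (f : ℕ+ → ℕ+ → FinSeq → ℕ+) (x y : PP) : Prop :=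
  y.2 = LL.top ∧ ∃ s : FinSeq, x.2 = LL.seq s ∧
    ∃ k : ℕ+, x.1 < k ∧ y.1 ∈ i x.1 k ∧ y.1 = f x.1 k s

/-- `(n,x) <₃ (m,⊤)` iff `x ∈ ℕ` and there is `d < n` with `m ∈ i(d,n)` and
`m = f_{d,n}(x)`. -/
def lt3 (i : ℕ+ → ℕ+ → Set ℕ+) (f : ℕ+ → ℕ+ → FinSeq → ℕ+) (x y : PP) : Prop :=
  y.2 = LL.top ∧ ∃ a : ℕ+, x.2 = LL.nat a ∧
    ∃ d : ℕ+, d < x.1 ∧ y.1 ∈ i d x.1 ∧ y.1 = f d x.1 (FinSeq.single a)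

/-- `(n,x) <₄ (m,⊤)` iff `x ∈ ℕ` and there are `a < b` and `s` with `f_{a,b}(s) = n` and
`f_{a,b}(s.x) = m`. -/
def lt4 (f : ℕ+ → ℕ+ → FinSeq → ℕ+) (x y : PP) : Prop :=
  y.2 = LL.top ∧ ∃ a : ℕ+, x.2 = LL.nat a ∧ ∃ p q : ℕ+, ∃ s : FinSeq,
    p < q ∧ f p q s = x.1 ∧ f p q (FinSeq.snoc s a) = y.1

/-- The strict order `< = <₁ ∪ <₂ ∪ <₃ ∪ <₄ ∪ <₁;<₂ ∪ <₁;<₃ ∪ <₁;<₄`. -/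
def Plt (i : ℕ+ → ℕ+ → Set ℕ+) (f : ℕ+ → ℕ+ → FinSeq → ℕ+) (x y : PP) : Prop :=
  lt1 x y ∨ lt2 i f x y ∨ lt3 i f x y ∨ lt4 f x y ∨
    (∃ z, lt1 x z ∧ lt2 i f z y) ∨ (∃ z, lt1 x z ∧ lt3 i f z y) ∨ (∃ z, lt1 x z ∧ lt4 f z y)

/-- The order `≤ = < ∪ =` on `P`. -/
def Ple (i : ℕ+ → ℕ+ → Set ℕ+) (f : ℕ+ → ℕ+ → FinSeq → ℕ+) (x y : PP) : Prop :=
  Plt i f x y ∨ x = y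

/-- Upper set with respect to a relation. -/
def RelUpperSet' {α : Type*} (r : α → α → Prop) (U : Set α) : Prop :=
  ∀ ⦃a b⦄, r a b → a ∈ U → b ∈ U

/-- Directedness with respect to a relation. -/
def RelDirectedOn {α : Type*} (r : α → α → Prop) (d : Set α) : Prop :=
  ∀ x ∈ d, ∀ y ∈ d, ∃ z ∈ d, r x z ∧ r y z

/-- Least upper bound with respect to a relation. -/
def RelIsLUB {α : Type*} (r : α → α → Prop) (d : Set α) (a : α) : Prop :=
  (∀ x ∈ d, r x a) ∧ ∀ b, (∀ x ∈ d, r x b) → r a b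

/-- Scott openness with respect to a relation: an upper set inaccessible by suprema of
directed sets. -/
def RelScottOpen {α : Type*} (r : α → α → Prop) (U : Set α) : Prop :=
  RelUpperSet' r U ∧ ∀ d : Set α, d.Nonempty → RelDirectedOn r d →
    ∀ a, RelIsLUB r d a → a ∈ U → (d ∩ U).Nonempty

/-!
Every strict relation ends either inside a fibre `{n} × L` (`<₁`) or at a top point `(m, ⊤)`
(the jumps `<₂, <₃, <₄`), and no jump starts at a top point; so two strict steps can never be
chained except through `<₁`, which gives transitivity and antisymmetry.

For irreducibility, the injectivity and disjointness of the `f_{m,n}` make the source of a jump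
into `(m, ⊤)` from a fibre `{n} × L` unique, so `(n, ⊤)` is the supremum of `{n} × D` for every
directed `D ⊆ L` without upper bound below `⊤`. Hence a Scott open set containing `(n, ⊤)` meets
the fibre over `n` in every increasing sequence of naturals and in every increasing chain of
sequences. Given Scott opens `U ∋ (n, ⊤)` and `V ∋ (N, ⊤)` with `n < N`, use `<₃` and then `<₄`
repeatedly to build a chain `s₀ ⊑ s₁ ⊑ ⋯` with every `(f_{n,N}(sₖ), ⊤) ∈ V`; some `(n, sₖ)` lies
in `U`, and `<₂` sends it to `(f_{n,N}(sₖ), ⊤) ∈ U ∩ V`.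
-/

theorem LL.le_top (x : LL) : x ≤ LL.top := by
  cases x <;> trivial

theorem LL.nonempty_of_upperBounds_subset {D : Set LL} (hD : upperBounds D ⊆ {LL.top}) :
    D.Nonempty := by
  refine Set.nonempty_iff_ne_empty.2 fun hD₀ => ?_
  have h₁ : LL.nat 1 = LL.top := hD (by rw [hD₀, upperBounds_empty]; trivial)
  cases h₁

theorem LL.upperBounds_range_nat : upperBounds (Set.range LL.nat) ⊆ {LL.top} := by
  rintro (c | s | -) hub
  · exact absurd (hub ⟨c + 1, rfl⟩ : c + 1 ≤ c) (PNat.lt_add_right c 1).not_ge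
  · exact (hub ⟨1, rfl⟩ : False).elim
  · rfl

theorem LL.upperBounds_range_seq (G : ℕ → FinSeq) (hlen : ∀ k, k < (G k).1.length) :
    upperBounds (Set.range fun k => LL.seq (G k)) ⊆ {LL.top} := by
  rintro (c | s | -) hub
  · exact (hub ⟨0, rfl⟩ : False).elim
  · have hle := (hub ⟨s.1.length, rfl⟩ : (G s.1.length).1 <+: s.1).length_le
    have hlt := hlen s.1.length
    omega
  · rfl

theorem FinSeq.single_injective : Function.Injective FinSeq.single := fun _ _ hab =>
  List.head_eq_of_cons_eq (congrArg Subtype.val hab)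

theorem FinSeq.single_ne_snoc (a : ℕ+) (s : FinSeq) (b : ℕ+) : FinSeq.single a ≠ s.snoc b :=
  fun he => by
    have hlen := congrArg (fun t : FinSeq => t.1.length) he
    simp only [FinSeq.single, FinSeq.snoc, List.length_append, List.length_singleton] at hlen
    exact s.2 (List.length_eq_zero_iff.1 (by omega))

theorem FinSeq.snoc_injective_right {s t : FinSeq} {a b : ℕ+} (he : s.snoc a = t.snoc b) :
    a = b :=
  List.head_eq_of_cons_eq (List.append_inj' (congrArg Subtype.val he) rfl).2

theorem FinSeq.exists_snoc_chain {P : FinSeq → Prop} (h₀ : ∃ a, P (FinSeq.single a))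
    (hstep : ∀ s, P s → ∃ a, P (s.snoc a)) :
    ∃ G : ℕ → FinSeq, (∀ k, (G k).1 <+: (G (k + 1)).1) ∧ (∀ k, k < (G k).1.length) ∧
      ∀ k, P (G k) := by
  obtain ⟨a, ha⟩ := h₀
  choose next hnext using hstep
  let step : {s // P s} → {s // P s} := fun s => ⟨s.1.snoc (next s.1 s.2), hnext s.1 s.2⟩
  let G : ℕ → {s // P s} := fun k => step^[k] ⟨FinSeq.single a, ha⟩
  have hG : ∀ k, G (k + 1) = step (G k) := fun k => Function.iterate_succ_apply' _ _ _
  refine ⟨fun k => (G k).1, fun k => ?_, fun k => ?_, fun k => (G k).2⟩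
  · simp only [hG]
    exact List.prefix_append _ _
  · induction k with
    | zero => simp [G, FinSeq.single]
    | succ k ih =>
      simp only [hG, step, FinSeq.snoc, List.length_append, List.length_singleton] at ih ⊢
      omega

def Jump (i : ℕ+ → ℕ+ → Set ℕ+) (f : ℕ+ → ℕ+ → FinSeq → ℕ+) (x y : PP) : Prop :=
  lt2 i f x y ∨ lt3 i f x y ∨ lt4 f x y

section

variable {i : ℕ+ → ℕ+ → Set ℕ+} {f : ℕ+ → ℕ+ → FinSeq → ℕ+}

theorem GoodData.f_mem (h : GoodData i f) {p q : ℕ+} (hpq : p < q) (s : FinSeq) :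
    f p q s ∈ i p q :=
  h.range p q hpq ▸ Set.mem_range_self s

theorem GoodData.lt_f (h : GoodData i f) {p q : ℕ+} (hpq : p < q) (s : FinSeq) : q < f p q s :=
  h.lower p q hpq _ (h.f_mem hpq s)

theorem GoodData.eq_of_f_eq (h : GoodData i f) {p q p' q' : ℕ+} {s s' : FinSeq} (hpq : p < q)
    (hpq' : p' < q') (he : f p q s = f p' q' s') : p = p' ∧ q = q' ∧ s = s' := by
  obtain ⟨rfl, rfl⟩ : p = p' ∧ q = q' := by
    by_contra hne
    have hmem : f p q s ∈ i p q ∩ i p' q' := ⟨h.f_mem hpq s, he ▸ h.f_mem hpq' s'⟩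
    rw [h.disjoint p q p' q' hpq hpq' (by simpa using hne)] at hmem
    exact hmem
  exact ⟨rfl, rfl, h.inj p q hpq he⟩

section Order

variable {x y z : PP}

theorem lt1_iff : lt1 x y ↔ x.1 = y.1 ∧ x.2 < y.2 := by
  rw [lt_iff_le_and_ne]
  rfl

theorem lt1.trans (hxy : lt1 x y) (hyz : lt1 y z) : lt1 x z :=
  lt1_iff.2 ⟨(lt1_iff.1 hxy).1.trans (lt1_iff.1 hyz).1,
    (lt1_iff.1 hxy).2.trans (lt1_iff.1 hyz).2⟩

theorem lt1.left_ne_top (hxy : lt1 x y) : x.2 ≠ LL.top := by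
  intro hx
  have htop := (lt1_iff.1 hxy).2.trans_le (LL.le_top y.2)
  rw [hx] at htop
  exact lt_irrefl _ htop

theorem Jump.right_eq_top (hxy : Jump i f x y) : y.2 = LL.top := by
  rcases hxy with hxy | hxy | hxy <;> exact hxy.1

theorem Jump.left_ne_top (hxy : Jump i f x y) : x.2 ≠ LL.top := by
  rcases hxy with ⟨-, s, hs, -⟩ | ⟨-, a, hs, -⟩ | ⟨-, a, hs, -⟩ <;> rw [hs] <;> nofun

theorem plt_iff : Plt i f x y ↔ lt1 x y ∨ Jump i f x y ∨ ∃ z, lt1 x z ∧ Jump i f z y := by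
  simp only [Plt, Jump, and_or_left, exists_or, or_assoc]

theorem Plt.left_ne_top (hxy : Plt i f x y) : x.2 ≠ LL.top := by
  rcases plt_iff.1 hxy with hxy | hxy | ⟨z, hxz, -⟩
  exacts [hxy.left_ne_top, hxy.left_ne_top, hxz.left_ne_top]

theorem Plt.lt1_of_ne_top (hxy : Plt i f x y) (hy : y.2 ≠ LL.top) : lt1 x y := by
  rcases plt_iff.1 hxy with hxy | hxy | ⟨z, -, hzy⟩
  exacts [hxy, absurd hxy.right_eq_top hy, absurd hzy.right_eq_top hy]

theorem Plt.trans (hxy : Plt i f x y) (hyz : Plt i f y z) : Plt i f x z := by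
  have hxy := hxy.lt1_of_ne_top hyz.left_ne_top
  rcases plt_iff.1 hyz with hyz | hyz | ⟨w, hyw, hwz⟩
  · exact plt_iff.2 (Or.inl (hxy.trans hyz))
  · exact plt_iff.2 (Or.inr (Or.inr ⟨y, hxy, hyz⟩))
  · exact plt_iff.2 (Or.inr (Or.inr ⟨w, hxy.trans hyw, hwz⟩))

theorem Plt.asymm (hxy : Plt i f x y) (hyx : Plt i f y x) : False :=
  lt_asymm (lt1_iff.1 (hxy.lt1_of_ne_top hyx.left_ne_top)).2
    (lt1_iff.1 (hyx.lt1_of_ne_top hxy.left_ne_top)).2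

theorem Ple.trans (hxy : Ple i f x y) (hyz : Ple i f y z) : Ple i f x z := by
  rcases hxy with hxy | rfl
  · rcases hyz with hyz | rfl
    exacts [Or.inl (hxy.trans hyz), Or.inl hxy]
  · exact hyz

theorem Ple.antisymm (hxy : Ple i f x y) (hyx : Ple i f y x) : x = y := by
  rcases hxy with hxy | rfl
  · rcases hyx with hyx | rfl
    exacts [(hxy.asymm hyx).elim, rfl]
  · rfl

theorem ple_mk_of_le (n : ℕ+) {a b : LL} (hab : a ≤ b) : Ple i f (n, a) (n, b) := by
  rcases eq_or_lt_of_le hab with rfl | hlt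
  exacts [Or.inr rfl, Or.inl (Or.inl (lt1_iff.2 ⟨rfl, hlt⟩))]

theorem ple_top (x : PP) : Ple i f x (x.1, LL.top) :=
  ple_mk_of_le x.1 (LL.le_top x.2)

theorem Ple.eq_and_le_of_ne_top (hxy : Ple i f x y) (hy : y.2 ≠ LL.top) :
    x.1 = y.1 ∧ x.2 ≤ y.2 := by
  rcases hxy with hxy | rfl
  · exact (lt1_iff.1 (hxy.lt1_of_ne_top hy)).imp_right le_of_lt
  · exact ⟨rfl, le_rfl⟩

theorem Ple.exists_jump {m : ℕ+} (hxy : Ple i f x (m, LL.top)) (hm : x.1 ≠ m) :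
    ∃ w, x.2 ≤ w ∧ Jump i f (x.1, w) (m, LL.top) := by
  rcases hxy with hxy | rfl
  · rcases plt_iff.1 hxy with hxy | hxy | ⟨z, hxz, hzy⟩
    · exact absurd hxy.1 hm
    · exact ⟨x.2, le_rfl, hxy⟩
    · exact ⟨z.2, hxz.2.1, hxz.1 ▸ hzy⟩
  · exact absurd rfl hm

end Order

theorem jump_seq (h : GoodData i f) {n q : ℕ+} (hnq : n < q) (s : FinSeq) :
    Jump i f (n, LL.seq s) (f n q s, LL.top) :=
  Or.inl ⟨rfl, s, rfl, q, hnq, h.f_mem hnq s, rfl⟩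

theorem jump_nat_single (h : GoodData i f) {d n : ℕ+} (hdn : d < n) (a : ℕ+) :
    Jump i f (n, LL.nat a) (f d n (FinSeq.single a), LL.top) :=
  Or.inr (Or.inl ⟨rfl, a, rfl, d, hdn, h.f_mem hdn _, rfl⟩)

theorem jump_nat_snoc {p q : ℕ+} (hpq : p < q) (s : FinSeq) (a : ℕ+) :
    Jump i f (f p q s, LL.nat a) (f p q (s.snoc a), LL.top) :=
  Or.inr (Or.inr ⟨rfl, a, rfl, p, q, s, hpq, rfl, rfl⟩)

theorem Jump.left_unique (h : GoodData i f) {n : ℕ+} {a b : LL} {y : PP}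
    (ha : Jump i f (n, a) y) (hb : Jump i f (n, b) y) : a = b := by
  rcases ha with ⟨-, s, rfl, q, hq, -, hy⟩ | ⟨-, c, rfl, d, hd, -, hy⟩ |
      ⟨-, c, rfl, p, q, t, hpq, ht, hy⟩ <;>
    rcases hb with ⟨-, s', rfl, q', hq', -, hy'⟩ | ⟨-, c', rfl, d', hd', -, hy'⟩ |
      ⟨-, c', rfl, p', q', t', hpq', ht', hy'⟩
  · obtain ⟨-, -, rfl⟩ := h.eq_of_f_eq hq hq' (hy.symm.trans hy')
    rfl
  · obtain ⟨rfl, -⟩ := h.eq_of_f_eq hq hd' (hy.symm.trans hy')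
    exact absurd hd' (lt_irrefl _)
  · obtain ⟨rfl, rfl, -⟩ := h.eq_of_f_eq hq hpq' (hy.symm.trans hy'.symm)
    exact absurd ht' (hq.trans (h.lt_f hq t')).ne'
  · obtain ⟨rfl, -⟩ := h.eq_of_f_eq hd hq' (hy.symm.trans hy')
    exact absurd hd (lt_irrefl _)
  · obtain ⟨-, -, hcc⟩ := h.eq_of_f_eq hd hd' (hy.symm.trans hy')
    exact congrArg LL.nat (FinSeq.single_injective hcc)
  · obtain ⟨-, -, hcc⟩ := h.eq_of_f_eq hd hpq' (hy.symm.trans hy'.symm)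
    exact absurd hcc (FinSeq.single_ne_snoc _ _ _)
  · obtain ⟨rfl, rfl, -⟩ := h.eq_of_f_eq hpq hq' (hy.trans hy')
    exact absurd ht (hq'.trans (h.lt_f hq' t)).ne'
  · obtain ⟨-, -, hcc⟩ := h.eq_of_f_eq hpq hd' (hy.trans hy')
    exact absurd hcc.symm (FinSeq.single_ne_snoc _ _ _)
  · obtain ⟨-, -, hcc⟩ := h.eq_of_f_eq hpq hpq' (hy.trans hy'.symm)
    exact congrArg LL.nat (FinSeq.snoc_injective_right hcc)

theorem relIsLUB_mk_top (h : GoodData i f) (n : ℕ+) {D : Set LL}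
    (hD : upperBounds D ⊆ {LL.top}) : RelIsLUB (Ple i f) (Prod.mk n '' D) (n, LL.top) := by
  refine ⟨by rintro _ ⟨x, -, rfl⟩; exact ple_top _, ?_⟩
  rintro ⟨m, y⟩ hub
  have hle : ∀ x ∈ D, Ple i f (n, x) (m, y) := fun x hx => hub _ ⟨x, hx, rfl⟩
  by_cases hy : y = LL.top
  · subst hy
    by_cases hm : n = m
    · subst hm
      exact Or.inr rfl
    obtain ⟨x₀, hx₀⟩ := LL.nonempty_of_upperBounds_subset hD
    obtain ⟨w₀, -, hw₀⟩ := (hle x₀ hx₀).exists_jump hm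
    have hw₀D : w₀ ∈ upperBounds D := fun x hx => by
      obtain ⟨w, hxw, hw⟩ := (hle x hx).exists_jump hm
      rwa [hw.left_unique h hw₀] at hxw
    exact absurd (hD hw₀D) hw₀.left_ne_top
  · exact absurd (hD fun x hx => ((hle x hx).eq_and_le_of_ne_top hy).2) hy

theorem relDirectedOn_image_mk (n : ℕ+) {D : Set LL} (hD : DirectedOn (· ≤ ·) D) :
    RelDirectedOn (Ple i f) (Prod.mk n '' D) := by
  rintro _ ⟨a, ha, rfl⟩ _ ⟨b, hb, rfl⟩
  obtain ⟨c, hc, hac, hbc⟩ := hD a ha b hb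
  exact ⟨(n, c), ⟨c, hc, rfl⟩, ple_mk_of_le n hac, ple_mk_of_le n hbc⟩

variable {U : Set PP}

theorem RelScottOpen.mem_of_jump (hU : RelScottOpen (Ple i f) U) {x y : PP}
    (hxy : Jump i f x y) (hx : x ∈ U) : y ∈ U :=
  hU.1 (Or.inl (plt_iff.2 (Or.inr (Or.inl hxy)))) hx

theorem RelScottOpen.top_mem (hU : RelScottOpen (Ple i f) U) {x : PP} (hx : x ∈ U) :
    (x.1, LL.top) ∈ U :=
  hU.1 (ple_top x) hx

theorem RelScottOpen.exists_mem_of_top_mem (h : GoodData i f) (hU : RelScottOpen (Ple i f) U)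
    {D : Set LL} (hdir : DirectedOn (· ≤ ·) D) (hD : upperBounds D ⊆ {LL.top}) {n : ℕ+}
    (hn : (n, LL.top) ∈ U) : ∃ x ∈ D, (n, x) ∈ U := by
  obtain ⟨_, ⟨x, hx, rfl⟩, hxU⟩ := hU.2 _ ((LL.nonempty_of_upperBounds_subset hD).image _)
    (relDirectedOn_image_mk n hdir) _ (relIsLUB_mk_top h n hD) hn
  exact ⟨x, hx, hxU⟩

theorem RelScottOpen.exists_nat_mem_of_top_mem (h : GoodData i f)
    (hU : RelScottOpen (Ple i f) U) {n : ℕ+} (hn : (n, LL.top) ∈ U) :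
    ∃ a, (n, LL.nat a) ∈ U := by
  obtain ⟨_, ⟨a, rfl⟩, ha⟩ := hU.exists_mem_of_top_mem h
    (directedOn_range.2 (Monotone.directed_le (f := LL.nat) fun _ _ hab => hab))
    LL.upperBounds_range_nat hn
  exact ⟨a, ha⟩

theorem RelScottOpen.exists_seq_mem_of_top_mem (h : GoodData i f)
    (hU : RelScottOpen (Ple i f) U) (G : ℕ → FinSeq) (hG : ∀ k, (G k).1 <+: (G (k + 1)).1)
    (hlen : ∀ k, k < (G k).1.length) {n : ℕ+} (hn : (n, LL.top) ∈ U) :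
    ∃ k, (n, LL.seq (G k)) ∈ U := by
  obtain ⟨_, ⟨k, rfl⟩, hk⟩ := hU.exists_mem_of_top_mem h
    (directedOn_range.2 (monotone_nat_of_le_succ hG).directed_le)
    (LL.upperBounds_range_seq G hlen) hn
  exact ⟨k, hk⟩

theorem RelScottOpen.exists_gt_top_mem (h : GoodData i f) (hU : RelScottOpen (Ple i f) U)
    {m : ℕ+} (hm : (m, LL.top) ∈ U) (n : ℕ+) : ∃ N, n < N ∧ (N, LL.top) ∈ U := by
  let G : ℕ → FinSeq := fun k => ⟨List.replicate (k + 1) 1, by simp⟩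
  obtain ⟨k, hk⟩ := hU.exists_seq_mem_of_top_mem h G
    (fun k => ⟨[1], (List.replicate_succ' (n := k + 1)).symm⟩) (fun k => by simp [G]) hm
  have hmq : m < m + n := PNat.lt_add_right m n
  refine ⟨f m (m + n) (G k), ?_, hU.mem_of_jump (jump_seq h hmq _) hk⟩
  exact (add_comm m n ▸ PNat.lt_add_right n m).trans (h.lt_f hmq _)

theorem RelScottOpen.exists_chain_top_mem (h : GoodData i f) (hU : RelScottOpen (Ple i f) U)
    {n N : ℕ+} (hnN : n < N) (hN : (N, LL.top) ∈ U) :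
    ∃ G : ℕ → FinSeq, (∀ k, (G k).1 <+: (G (k + 1)).1) ∧ (∀ k, k < (G k).1.length) ∧
      ∀ k, (f n N (G k), LL.top) ∈ U := by
  refine FinSeq.exists_snoc_chain (P := fun s => (f n N s, LL.top) ∈ U) ?_ ?_
  · obtain ⟨a, ha⟩ := hU.exists_nat_mem_of_top_mem h hN
    exact ⟨a, hU.mem_of_jump (jump_nat_single h hnN a) ha⟩
  · intro s hs
    obtain ⟨a, ha⟩ := hU.exists_nat_mem_of_top_mem h hs
    exact ⟨a, hU.mem_of_jump (jump_nat_snoc hnN s a) ha⟩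

end

/-- The relation `≤` defined from the data of the construction is a partial order on
`P = ℕ × L`, and `P` is an irreducible subset of its Scott space: any two nonempty
Scott open subsets of `P` intersect. -/
theorem Ple_partialOrder_and_irreducible (i : ℕ+ → ℕ+ → Set ℕ+)
    (f : ℕ+ → ℕ+ → FinSeq → ℕ+) (h : GoodData i f) :
    Reflexive (Ple i f) ∧ Transitive (Ple i f) ∧ AntiSymmetric (Ple i f) ∧
    (∀ U V : Set PP, RelScottOpen (Ple i f) U → RelScottOpen (Ple i f) V →
      U.Nonempty → V.Nonempty → (U ∩ V).Nonempty) := by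
  refine ⟨fun _ => Or.inr rfl, fun _ _ _ => Ple.trans, fun _ _ => Ple.antisymm, ?_⟩
  rintro U V hU hV ⟨u, hu⟩ ⟨v, hv⟩
  obtain ⟨N, huN, hN⟩ := hV.exists_gt_top_mem h (hV.top_mem hv) u.1
  obtain ⟨G, hG, hlen, hGV⟩ := hV.exists_chain_top_mem h huN hN
  obtain ⟨k, hk⟩ := hU.exists_seq_mem_of_top_mem h G hG hlen (hU.top_mem hu)
  exact ⟨_, hU.mem_of_jump (jump_seq h huN _) hk, hGV k⟩
end

section
/- With P the countable poset constructed above, the poset M = {⋂_{x∈E} ↓x : E ⊆ P} of all intersections of principal ideals of P, ordered by inclusion, is a bounded complete dcpo (every directed subset has a supremum, and every subset bounded above has a supremum), and M is countable. -/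
/-- `M`: the collection of all intersections of principal ideals of `P`
(for `E = ∅` the intersection is all of `P`). -/
def MM (i : ℕ+ → ℕ+ → Set ℕ+) (f : ℕ+ → ℕ+ → FinSeq → ℕ+) : Set (Set PP) :=
  {S | ∃ E : Set PP, S = ⋂ x ∈ E, {y : PP | Ple i f y x}}

/-! Every intersection of members of `M` is again an intersection of principal ideals (over all
upper bounds of it), so any subset of `M` has a least upper bound: the intersection of the
members of `M` containing it.

For countability, view `P = ℕ × L` as a union of columns `{m} × L`. An ideal `↓(m, w)` with
`w ≠ ⊤` is finite, since `L` below a non-top point is finite. The ideal `↓(m, ⊤)` is the whole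
column `m` together with finitely many points: disjointness of the `i(p, k)` and injectivity of
the `f(p, k)` allow at most one representation `m = f(p, k)(s)`, and every point of `↓(m, ⊤)`
outside column `m` lies in a column `≤ m`, below `s` or below a letter of `s`. Sets of the form
"finite set ∪ finitely many full columns" are closed under nonempty intersections and are
countably many. -/

open Set

section PrincipalIntersections

variable {α : Type*}

def idealIntersections (r : α → α → Prop) : Set (Set α) :=
  {S | ∃ E : Set α, S = ⋂ x ∈ E, {y | r y x}}

theorem sInter_mem_idealIntersections (r : α → α → Prop) {𝒮 : Set (Set α)}
    (h𝒮 : 𝒮 ⊆ idealIntersections r) : ⋂₀ 𝒮 ∈ idealIntersections r := by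
  refine ⟨{x | ⋂₀ 𝒮 ⊆ {y | r y x}},
    Subset.antisymm (fun y hy => mem_iInter₂.2 fun x hx => hx hy) ?_⟩
  intro y hy S hS
  obtain ⟨E, rfl⟩ := h𝒮 hS
  exact mem_iInter₂.2 fun x hx =>
    mem_iInter₂.1 hy x ((sInter_subset_of_mem hS).trans (biInter_subset_of_mem hx))

theorem exists_isLUB_of_sInter_mem {𝒜 : Set (Set α)} (h𝒜 : ∀ 𝒮 ⊆ 𝒜, ⋂₀ 𝒮 ∈ 𝒜)
    (D : Set 𝒜) : ∃ a : 𝒜, IsLUB D a := by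
  let U : Set (Set α) := {T | T ∈ 𝒜 ∧ ∀ S ∈ D, (S : Set α) ⊆ T}
  refine ⟨⟨⋂₀ U, h𝒜 U fun _ hT => hT.1⟩, fun S hS => subset_sInter fun _ hT => hT.2 S hS,
    fun B hB => sInter_subset_of_mem ⟨B.2, fun _ hS => hB hS⟩⟩

end PrincipalIntersections

section FiniteUpToColumns

variable {α β : Type*}

def FiniteUpToColumns (S : Set (α × β)) : Prop :=
  ∃ A : Set (α × β), ∃ B : Set α, A.Finite ∧ B.Finite ∧ S = A ∪ B ×ˢ univ

theorem countable_setOf_finiteUpToColumns [Countable α] [Countable β] :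
    {S : Set (α × β) | FiniteUpToColumns S}.Countable := by
  refine (Countable.ofPred_finite.image2 Countable.ofPred_finite
    fun (A : Set (α × β)) (B : Set α) => A ∪ B ×ˢ univ).mono ?_
  rintro S ⟨A, B, hA, hB, rfl⟩
  exact mem_image2_of_mem hA hB

theorem FiniteUpToColumns.biInter {ι : Type*} {E : Set ι} (hE : E.Nonempty)
    {S : ι → Set (α × β)} (hS : ∀ x ∈ E, FiniteUpToColumns (S x)) :
    FiniteUpToColumns (⋂ x ∈ E, S x) := by
  set T := ⋂ x ∈ E, S x
  obtain ⟨x₀, hx₀⟩ := hE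
  obtain ⟨A₀, B₀, hA₀, hB₀, hS₀⟩ := hS x₀ hx₀
  let B := {c ∈ B₀ | {c} ×ˢ univ ⊆ T}
  have hcol : ∀ c ∉ B, c ∈ B₀ → (T ∩ {c} ×ˢ univ).Finite := by
    -- some `S x` misses a point of column `c`, so only its finite part meets that column
    intro c hcB hcB₀
    obtain ⟨⟨c', z⟩, ⟨rfl, -⟩, hz⟩ := not_subset.1 fun h => hcB ⟨hcB₀, h⟩
    obtain ⟨x, hx, hzx⟩ := by simpa [T] using hz
    obtain ⟨A, B', hA, -, hSx⟩ := hS x hx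
    refine hA.subset fun y ⟨hyT, hy, _⟩ => ?_
    have hyx : y ∈ A ∪ B' ×ˢ univ := hSx ▸ mem_iInter₂.1 hyT x hx
    have hc : c' ∉ B' := fun hc => hzx (hSx ▸ Or.inr ⟨hc, trivial⟩)
    exact hyx.resolve_right fun h => hc ((show y.1 = c' from hy) ▸ h.1)
  have hBT : B ×ˢ univ ⊆ T := fun y hy => hy.1.2 ⟨rfl, trivial⟩
  refine ⟨T \ B ×ˢ univ, B, ?_, hB₀.subset fun _ hc => hc.1, (sdiff_union_of_subset hBT).symm⟩
  refine (hA₀.union ((hB₀.sdiff (t := B)).biUnion fun c hc => hcol c hc.2 hc.1)).subset ?_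
  rintro y ⟨hyT, hyB⟩
  rcases hS₀ ▸ mem_iInter₂.1 hyT x₀ hx₀ with hy | ⟨hy, -⟩
  · exact Or.inl hy
  · exact Or.inr (mem_biUnion ⟨hy, fun h => hyB ⟨h, trivial⟩⟩ ⟨hyT, rfl, trivial⟩)

end FiniteUpToColumns

instance : Countable FinSeq := inferInstanceAs (Countable {l : List ℕ+ // l ≠ []})

instance : Countable LL := by
  refine Function.Surjective.countable
    (f := Sum.elim LL.nat (Sum.elim LL.seq fun _ : Unit => LL.top)) ?_
  rintro (n | s | _)
  exacts [⟨.inl n, rfl⟩, ⟨.inr (.inl s), rfl⟩, ⟨.inr (.inr ()), rfl⟩]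

namespace LL

theorem le_top_s13 (z : LL) : z ≤ top := by
  cases z <;> trivial

theorem finite_Iic {w : LL} (hw : w ≠ top) : (Iic w).Finite := by
  cases w with
  | top => exact absurd rfl hw
  | nat a =>
    refine ((Set.finite_Iic a).image nat).subset ?_
    rintro (b | t | _) hb
    exacts [⟨b, hb, rfl⟩, (hb : False).elim, (hb : False).elim]
  | seq s =>
    have hpre : {t : FinSeq | t.1 <+: s.1}.Finite :=
      (List.finite_toSet s.1.inits).preimage Subtype.val_injective.injOn |>.subset
        fun t ht => (List.mem_inits _ _).2 ht
    refine (hpre.image seq).subset ?_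
    rintro (b | t | _) ht
    exacts [(ht : False).elim, ⟨t, ht, rfl⟩, (ht : False).elim]

end LL

-- the points of `L` lying directly below `(f p k s, ⊤)` via `<₂`, `<₃`, `<₄`
def FinSeq.nodes (s : FinSeq) : Set LL := insert (.seq s) (.nat '' {a | a ∈ s.1})

theorem FinSeq.finite_nodes (s : FinSeq) : s.nodes.Finite :=
  ((List.finite_toSet s.1).image _).insert _

theorem FinSeq.top_notMem_nodes (s : FinSeq) : LL.top ∉ s.nodes := by
  rintro (h | ⟨a, -, h⟩) <;> cases h

section Construction

variable {i : ℕ+ → ℕ+ → Set ℕ+} {f : ℕ+ → ℕ+ → FinSeq → ℕ+}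

def ltTop (i : ℕ+ → ℕ+ → Set ℕ+) (f : ℕ+ → ℕ+ → FinSeq → ℕ+) (g x : PP) : Prop :=
  lt2 i f g x ∨ lt3 i f g x ∨ lt4 f g x

theorem ltTop.snd_eq_top {g x : PP} (h : ltTop i f g x) : x.2 = .top := by
  rcases h with h | h | h <;> exact h.1

theorem Ple.cases {y x : PP} (h : Ple i f y x) :
    y = x ∨ lt1 y x ∨ ∃ g : PP, y.1 = g.1 ∧ y.2 ≤ g.2 ∧ ltTop i f g x := by
  rcases h with (h | h | h | h | ⟨g, hyg, hg⟩ | ⟨g, hyg, hg⟩ | ⟨g, hyg, hg⟩) | h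
  · exact .inr (.inl h)
  · exact .inr (.inr ⟨y, rfl, le_rfl, .inl h⟩)
  · exact .inr (.inr ⟨y, rfl, le_rfl, .inr (.inl h)⟩)
  · exact .inr (.inr ⟨y, rfl, le_rfl, .inr (.inr h)⟩)
  · exact .inr (.inr ⟨g, hyg.1, hyg.2.1, .inl hg⟩)
  · exact .inr (.inr ⟨g, hyg.1, hyg.2.1, .inr (.inl hg)⟩)
  · exact .inr (.inr ⟨g, hyg.1, hyg.2.1, .inr (.inr hg)⟩)
  · exact .inl h

theorem setOf_ple_subset_of_ne_top {x : PP} (hx : x.2 ≠ .top) :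
    {y | Ple i f y x} ⊆ {x.1} ×ˢ Iic x.2 := by
  intro y hy
  rcases hy.cases with rfl | h | ⟨g, -, -, hg⟩
  · exact ⟨mem_singleton _, self_mem_Iic⟩
  · exact ⟨h.1, h.2.1⟩
  · exact absurd hg.snd_eq_top hx

theorem column_subset_setOf_ple_top (m : ℕ+) :
    {m} ×ˢ univ ⊆ {y | Ple i f y (m, .top)} := by
  rintro ⟨c, z⟩ ⟨rfl, -⟩
  by_cases hz : z = .top
  · exact .inr (hz ▸ rfl)
  · exact .inl (.inl ⟨rfl, LL.le_top_s13 z, hz⟩)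

namespace GoodData

theorem subsingleton_rep (h : GoodData i f) (m : ℕ+) :
    {r : ℕ+ × ℕ+ × FinSeq | r.1 < r.2.1 ∧ f r.1 r.2.1 r.2.2 = m}.Subsingleton := by
  rintro ⟨p, k, s⟩ ⟨hpk, hs⟩ ⟨p', k', s'⟩ ⟨hpk', hs'⟩
  have hmem : m ∈ i p k ∩ i p' k' := ⟨h.range p k hpk ▸ ⟨s, hs⟩, h.range p' k' hpk' ▸ ⟨s', hs'⟩⟩
  obtain ⟨rfl, rfl⟩ : p = p' ∧ k = k' := by
    by_contra hne
    exact (h.disjoint p k p' k' hpk hpk' (by simpa using hne)).subset hmem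
  obtain rfl := h.inj p k hpk (hs.trans hs'.symm)
  rfl

theorem exists_rep_of_ltTop (h : GoodData i f) {g x : PP} (hg : ltTop i f g x) :
    ∃ p k s, p < k ∧ f p k s = x.1 ∧ g.1 ≤ x.1 ∧ g.2 ∈ s.nodes := by
  rcases hg with ⟨-, s, hs, k, hk, hmem, hf⟩ | ⟨-, a, ha, d, hd, hmem, hf⟩ |
    ⟨-, a, ha, p, q, s, hpq, hfs, hfsa⟩
  · exact ⟨g.1, k, s, hk, hf.symm, (hk.trans (h.lower _ _ hk _ hmem)).le, .inl hs⟩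
  · exact ⟨d, g.1, _, hd, hf.symm, (h.lower _ _ hd _ hmem).le,
      .inr ⟨a, by simp [FinSeq.single], ha.symm⟩⟩
  · refine ⟨p, q, _, hpq, hfsa, ?_, .inr ⟨a, by simp [FinSeq.snoc], ha.symm⟩⟩
    exact hfs ▸ hfsa ▸ h.mono p q hpq _ _ (List.prefix_append _ _)

theorem finite_setOf_ple_top_sdiff_column (h : GoodData i f) (m : ℕ+) :
    ({y | Ple i f y (m, .top)} \ {m} ×ˢ univ).Finite := by
  have hfin : ∀ r : ℕ+ × ℕ+ × FinSeq, (Iic m ×ˢ ⋃ t ∈ r.2.2.nodes, Iic t).Finite :=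
    fun r => (finite_Iic m).prod <| r.2.2.finite_nodes.biUnion fun t ht =>
      LL.finite_Iic (ne_of_mem_of_not_mem ht r.2.2.top_notMem_nodes)
  refine ((h.subsingleton_rep m).finite.biUnion fun r _ => hfin r).subset ?_
  rintro ⟨c, z⟩ ⟨hz, hc⟩
  rcases hz.cases with heq | hlt | ⟨g, hcg, hzg, hg⟩
  · exact absurd (heq ▸ ⟨rfl, trivial⟩) hc
  · exact absurd ⟨hlt.1, trivial⟩ hc
  · obtain ⟨p, k, s, hpk, hfs, hgm, hgs⟩ := h.exists_rep_of_ltTop hg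
    exact mem_biUnion (x := (p, k, s)) ⟨hpk, hfs⟩ ⟨hcg ▸ hgm, mem_biUnion hgs hzg⟩

theorem finiteUpToColumns_setOf_ple (h : GoodData i f) (x : PP) :
    FiniteUpToColumns {y | Ple i f y x} := by
  obtain ⟨m, w⟩ := x
  by_cases hw : w = .top
  · subst hw
    exact ⟨_, {m}, h.finite_setOf_ple_top_sdiff_column m, finite_singleton m,
      (sdiff_union_of_subset (column_subset_setOf_ple_top m)).symm⟩
  · refine ⟨{y | Ple i f y (m, w)}, ∅, ((finite_singleton m).prod (LL.finite_Iic hw)).subset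
      (setOf_ple_subset_of_ne_top (x := (m, w)) hw), finite_empty, ?_⟩
    simp

theorem countable_MM (h : GoodData i f) : (MM i f).Countable := by
  refine ((countable_setOf_finiteUpToColumns).insert univ).mono ?_
  rintro S ⟨E, rfl⟩
  rcases E.eq_empty_or_nonempty with rfl | hE
  · simp
  · exact .inr (FiniteUpToColumns.biInter hE fun x _ => h.finiteUpToColumns_setOf_ple x)

end GoodData

end Construction

/-- `M`, ordered by inclusion, is a countable bounded complete dcpo: every directed subset
has a supremum, every subset bounded above has a supremum, and `M` is countable. -/
theorem MM_countable_boundedComplete_dcpo (i : ℕ+ → ℕ+ → Set ℕ+)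
    (f : ℕ+ → ℕ+ → FinSeq → ℕ+) (h : GoodData i f) :
    (∀ D : Set ↥(MM i f), D.Nonempty → DirectedOn (· ≤ ·) D → ∃ a : ↥(MM i f), IsLUB D a) ∧
    (∀ S : Set ↥(MM i f), (∃ b : ↥(MM i f), ∀ x ∈ S, x ≤ b) → ∃ a : ↥(MM i f), IsLUB S a) ∧
    (MM i f).Countable := by
  have hlub : ∀ D : Set (MM i f), ∃ a : MM i f, IsLUB D a :=
    exists_isLUB_of_sInter_mem fun _ => sInter_mem_idealIntersections (Ple i f)
  exact ⟨fun D _ _ => hlub D, fun S _ => hlub S, h.countable_MM⟩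
end

section
/- Let R be a complete lattice in which the opposite poset R^op is a dcpo whose every element is compact (every principal ideal ↓x is Scott-open in R^op viewpoint; equivalently every element of R is 'co-compact'). Let F = {↓F : F a finite subset of R} be the lattice of finitely generated lower sets ordered by inclusion. Then F is closed under arbitrary intersections of filtered families, and (F, ⊆) is a complete lattice. -/
/-- The collection of finitely generated lower sets `↓F = ⋃_{x ∈ F} ↓x`, `F ⊆ R` finite. -/
def FinLower (R : Type*) [Preorder R] : Set (Set R) :=
  {S | ∃ t : Finset R, S = ⋃ x ∈ t, Set.Iic x}

/-!
Compactness of every element of `Rᵒᵈ` says exactly that `<` is well-founded on `R`.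
A finitely generated lower set is the lower closure of its finitely many maximal elements, and
if `A ⊂ B` then every maximal element of `A` that is not maximal in `B` lies strictly below a
maximal element of `B` that is not maximal in `A`. So strict inclusion decreases the multiset of
maximal elements in the Dershowitz–Manna order, which is well-founded over a well-founded order.
Hence a filtered family of finitely generated lower sets has a least member, its intersection.
The finitely generated upper bounds of any family form such a filtered family (they are closed
under `∩` in a lattice), so their intersection is a least upper bound; greatest lower bounds are
least upper bounds of the lower bounds.
-/

namespace FinLower

section PartialOrder

variable {α : Type*} [PartialOrder α] {A B : Set α}

theorem maximal_mem_lowerClosure_iff {s : Set α} {x : α} :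
    Maximal (· ∈ lowerClosure s) x ↔ Maximal (· ∈ s) x := by
  refine ⟨fun h ↦ ?_, fun h ↦ ⟨subset_lowerClosure h.prop, fun y ⟨a, has, hya⟩ hxy ↦ ?_⟩⟩
  · obtain ⟨a, has, hxa⟩ := h.prop
    obtain rfl := h.eq_of_ge (subset_lowerClosure has) hxa
    exact h.mono (fun _ hy ↦ subset_lowerClosure hy) has
  · exact hya.trans (h.le_of_ge has (hxy.trans hya))

theorem mem_iff_exists_finset : A ∈ FinLower α ↔ ∃ t : Finset α, A = lowerClosure (t : Set α) := by
  simp [FinLower, coe_lowerClosure]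

theorem isLowerSet (hA : A ∈ FinLower α) : IsLowerSet A := by
  obtain ⟨t, rfl⟩ := mem_iff_exists_finset.1 hA
  exact (lowerClosure _).lower

theorem finite_setOf_maximal (hA : A ∈ FinLower α) : {m | Maximal (· ∈ A) m}.Finite := by
  obtain ⟨t, rfl⟩ := mem_iff_exists_finset.1 hA
  exact t.finite_toSet.subset fun m hm ↦ (maximal_mem_lowerClosure_iff.1 hm).prop

theorem exists_le_maximal (hA : A ∈ FinLower α) {a : α} (ha : a ∈ A) :
    ∃ m, a ≤ m ∧ Maximal (· ∈ A) m := by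
  obtain ⟨t, rfl⟩ := mem_iff_exists_finset.1 hA
  obtain ⟨x, hxt, hax⟩ := ha
  obtain ⟨m, hxm, hm⟩ := t.exists_le_maximal hxt
  exact ⟨m, hax.trans hxm, maximal_mem_lowerClosure_iff.2 hm⟩

theorem subset_of_forall_maximal_mem (hA : IsLowerSet A) (hB : B ∈ FinLower α)
    (h : ∀ m, Maximal (· ∈ B) m → m ∈ A) : B ⊆ A := fun b hb ↦ by
  obtain ⟨m, hbm, hm⟩ := exists_le_maximal hB hb
  exact hA hbm (h m hm)

theorem isDershowitzMannaLT_of_ssubset (hA : A ∈ FinLower α) (hB : B ∈ FinLower α)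
    (hAB : A ⊂ B) :
    Multiset.IsDershowitzMannaLT (finite_setOf_maximal hA).toFinset.val
      (finite_setOf_maximal hB).toFinset.val := by
  classical
  set s := (finite_setOf_maximal hA).toFinset
  set t := (finite_setOf_maximal hB).toFinset
  have hs : ∀ {m}, m ∈ s ↔ Maximal (· ∈ A) m := Set.Finite.mem_toFinset _
  have ht : ∀ {m}, m ∈ t ↔ Maximal (· ∈ B) m := Set.Finite.mem_toFinset _
  refine ⟨(s ∩ t).val, (s \ t).val, (t \ s).val, ?_, ?_, ?_, ?_⟩
  · rw [Multiset.empty_eq_zero, Ne, Finset.val_eq_zero, Finset.sdiff_eq_empty_iff_subset]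
    exact fun hts ↦ hAB.not_subset <|
      subset_of_forall_maximal_mem (isLowerSet hA) hB fun m hm ↦ (hs.1 (hts (ht.2 hm))).prop
  · rw [Finset.inter_val, Finset.sdiff_val, add_comm, Multiset.sub_add_inter]
  · rw [Finset.inter_comm, Finset.inter_val, Finset.sdiff_val, add_comm, Multiset.sub_add_inter]
  · intro y hy
    rw [Finset.mem_val, Finset.mem_sdiff, hs, ht] at hy
    obtain ⟨m, hym, hm⟩ := exists_le_maximal hB (hAB.subset hy.1.prop)
    have hlt : y < m := hym.lt_of_ne fun h ↦ hy.2 (h ▸ hm)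
    refine ⟨m, ?_, hlt⟩
    rw [Finset.mem_val, Finset.mem_sdiff, hs, ht]
    exact ⟨hm, fun h ↦ hy.1.not_gt h.prop hlt⟩

variable [WellFoundedLT α]

theorem wellFoundedOn_lt : (FinLower α).WellFoundedOn (· < ·) :=
  Subrelation.wf (fun {A B} h ↦ isDershowitzMannaLT_of_ssubset A.2 B.2 h)
    (InvImage.wf (fun A : FinLower α ↦ (finite_setOf_maximal A.2).toFinset.val)
      Multiset.wellFounded_isDershowitzMannaLT)

theorem exists_isLeast_of_directedOn {C : Set (Set α)} (hne : C.Nonempty) (hC : C ⊆ FinLower α)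
    (hdir : DirectedOn (· ⊇ ·) C) : ∃ A, IsLeast C A := by
  obtain ⟨A, hA⟩ := (wellFoundedOn_lt.subset hC).exists_minimal hne
  exact ⟨A, hdir.minimal_iff_isLeast.1 hA⟩

theorem sInter_mem_of_directedOn {C : Set (Set α)} (hne : C.Nonempty) (hC : C ⊆ FinLower α)
    (hdir : DirectedOn (· ⊇ ·) C) : ⋂₀ C ∈ FinLower α := by
  obtain ⟨A, hA⟩ := exists_isLeast_of_directedOn hne hC hdir
  rw [← Set.sInf_eq_sInter, hA.isGLB.sInf_eq]
  exact hC hA.1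

end PartialOrder

section SemilatticeInf

variable {α : Type*} [SemilatticeInf α] {A B : Set α}

open scoped SetFamily FinsetFamily in
theorem inter_mem (hA : A ∈ FinLower α) (hB : B ∈ FinLower α) : A ∩ B ∈ FinLower α := by
  classical
  obtain ⟨s, rfl⟩ := mem_iff_exists_finset.1 hA
  obtain ⟨t, rfl⟩ := mem_iff_exists_finset.1 hB
  refine mem_iff_exists_finset.2 ⟨s ⊼ t, ?_⟩
  rw [Finset.coe_infs, lowerClosure_infs, LowerSet.coe_inf]

theorem univ_mem [OrderTop α] : (Set.univ : Set α) ∈ FinLower α :=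
  ⟨{⊤}, by simp⟩

theorem exists_isLUB [OrderTop α] [WellFoundedLT α] (S : Set (FinLower α)) :
    ∃ A : FinLower α, IsLUB S A := by
  set U := {A | A ∈ FinLower α ∧ ∀ B ∈ S, (B : Set α) ⊆ A}
  have hdir : DirectedOn (· ⊇ ·) U := fun A hA B hB ↦
    ⟨A ∩ B, ⟨inter_mem hA.1 hB.1, fun C hC ↦ Set.subset_inter (hA.2 C hC) (hB.2 C hC)⟩,
      Set.inter_subset_left, Set.inter_subset_right⟩
  have hU : ⋂₀ U ∈ FinLower α :=
    sInter_mem_of_directedOn ⟨_, univ_mem, fun _ _ ↦ Set.subset_univ _⟩ (fun _ h ↦ h.1) hdir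
  exact ⟨⟨_, hU⟩, fun B hB ↦ Set.subset_sInter fun A hA ↦ hA.2 B hB,
    fun A hA ↦ Set.sInter_subset_of_mem ⟨A.2, fun B hB ↦ hA hB⟩⟩

end SemilatticeInf

end FinLower

/-- Let `R` be a complete lattice such that every element of the opposite lattice `Rᵒᵈ` is
compact.  Then the collection `F` of finitely generated lower sets of `R` is closed under
intersections of (nonempty) filtered families, and `(F, ⊆)` is a complete lattice (every
subset of `F` has a least upper bound and a greatest lower bound). -/
theorem finLower_filtered_inter_and_complete {R : Type*} [CompleteLattice R]
    (hcomp : ∀ x : Rᵒᵈ, IsCompactElement x) :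
    (∀ C : Set (Set R), C.Nonempty → (∀ A ∈ C, A ∈ FinLower R) →
      DirectedOn (fun A B : Set R => B ⊆ A) C → ⋂₀ C ∈ FinLower R) ∧
    (∀ S : Set ↥(FinLower R), (∃ a : ↥(FinLower R), IsLUB S a) ∧
      (∃ b : ↥(FinLower R), IsGLB S b)) := by
  have : WellFoundedLT R := (CompleteLattice.wellFoundedGT_characterisations Rᵒᵈ).out 3 0 |>.1 hcomp
  refine ⟨fun C hne hC hdir ↦ FinLower.sInter_mem_of_directedOn hne hC hdir,
    fun S ↦ ⟨FinLower.exists_isLUB S, ?_⟩⟩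
  obtain ⟨b, hb⟩ := FinLower.exists_isLUB (lowerBounds S)
  exact ⟨b, isLUB_lowerBounds.1 hb⟩
end
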